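/- arXiv:2205.05553 — 5 statements merged into one kernel-verified Lean document; each statement's English description precedes it below -/
import Mathlib

section
/- Let S be a simple random walk on ℤ and for k ≥ 1 let T(k,x,n) denote the number of k-excursions starting from x (visits to x−k between consecutive visits to x) completed by time n. Then for any n, k ≥ 1, every k-excursion starting at x with x = (k/2)·j + r, 0 ≤ r < k/2, contains at least one (k/2)-excursion starting at (k/2)·j; consequently T(k, x, n) ≤ T(k/2, (k/2)·⌊x/(k/2)⌋, n). -/
open scoped Classical

/-- The number of `k`-excursions of the path `S` starting from `x` completed by time `n`:
an excursion starts at a time `j ≤ n` with `S j = x` such that the walk reaches `x - k`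
(by time `n`) before its next visit to `x`. -/
noncomputable def excCount (S : ℕ → ℤ) (k : ℕ) (x : ℤ) (n : ℕ) : ℕ :=
  ((Finset.range (n + 1)).filter (fun j =>
    S j = x ∧ ∃ t, j < t ∧ t ≤ n ∧ S t = x - (k : ℤ) ∧
      ∀ u, j < u → u < t → S u ≠ x)).card

/-- If a `±1`-step walk is `≥ c` at time `a` and `< c` at time `b ≥ a`, then the last time
`g ≤ b` at which the walk is `≥ c` satisfies `a ≤ g < b`, `S g = c`, and the walk is `< c`
strictly between `g` and `b` (inclusive of `b`). -/
lemma lastHit (S : ℕ → ℤ) (hS : ∀ t, (S (t + 1) - S t).natAbs = 1)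
    {a b : ℕ} {c : ℤ} (hab : a ≤ b) (ha : c ≤ S a) (hb : S b < c) :
    a ≤ Nat.findGreatest (fun u => c ≤ S u) b ∧
    Nat.findGreatest (fun u => c ≤ S u) b < b ∧
    S (Nat.findGreatest (fun u => c ≤ S u) b) = c ∧
    ∀ v, Nat.findGreatest (fun u => c ≤ S u) b < v → v ≤ b → S v < c := by
  set g := Nat.findGreatest (fun u => c ≤ S u) b with hg
  have hag : a ≤ g := Nat.le_findGreatest (P := fun u => c ≤ S u) hab ha
  have hgspec : c ≤ S g := Nat.findGreatest_spec (P := fun u => c ≤ S u) hab ha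
  have hgb : g ≤ b := Nat.findGreatest_le b
  have hgne : g ≠ b := by
    intro h; rw [h] at hgspec; omega
  have hglt : g < b := lt_of_le_of_ne hgb hgne
  have hafter : ∀ v, g < v → v ≤ b → S v < c := by
    intro v hv hvb
    have := Nat.findGreatest_is_greatest (P := fun u => c ≤ S u) hv hvb
    omega
  have hstep : S (g + 1) < c := hafter (g + 1) (Nat.lt_succ_self g) hglt
  have habs := hS g
  rw [Int.natAbs_eq_iff] at habs
  have hSg : S g = c := by omega
  exact ⟨hag, hglt, hSg, hafter⟩

/-- Every `k`-excursion from `x` (with `k = 2m` even) contains a `(k/2)`-excursion from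
`(k/2)⌊x/(k/2)⌋`; consequently `T(k,x,n) ≤ T(k/2, (k/2)⌊x/(k/2)⌋, n)`. -/
theorem excCount_le_excCount_half (S : ℕ → ℤ) (hS : ∀ t, (S (t + 1) - S t).natAbs = 1)
    (m : ℕ) (hm : 1 ≤ m) (x : ℤ) (n : ℕ) :
    excCount S (2 * m) x n ≤ excCount S m ((m : ℤ) * Int.fdiv x (m : ℤ)) n := by
  classical
  set y : ℤ := (m : ℤ) * Int.fdiv x (m : ℤ) with hy
  have hmpos : (0 : ℤ) < (m : ℤ) := by exact_mod_cast hm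
  have hfd := Int.fmod_add_mul_fdiv x (m : ℤ)
  have hylex : y ≤ x := by
    have := Int.fmod_nonneg_of_pos x hmpos; omega
  have hxlt : x < y + m := by
    have := Int.fmod_lt_of_pos x hmpos; omega
  -- the predicate describing an excursion witness
  set P : ℕ → ℕ → Prop := fun j t => j < t ∧ t ≤ n ∧ S t = x - ((2 * m : ℕ) : ℤ) ∧
      ∀ u, j < u → u < t → S u ≠ x with hP
  unfold excCount
  set f : ℕ → ℕ := fun j =>
    if h : ∃ t, P j t then Nat.findGreatest (fun u => y ≤ S u) (Nat.find h) else 0 with hf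
  apply Finset.card_le_card_of_injOn f
  · -- maps into
    intro j hj
    simp only [Finset.mem_coe, Finset.mem_filter, Finset.mem_range] at hj ⊢
    obtain ⟨hjn, hjx, hex⟩ := hj
    have hex' : ∃ t, P j t := hex
    set τ := Nat.find hex' with hτ
    have hτspec : P j τ := Nat.find_spec hex'
    obtain ⟨hjτ, hτn, hSτ, hnoret⟩ := hτspec
    have hSτ' : S τ < y := by
      push_cast at hSτ; omega
    have h1 := lastHit S hS (le_of_lt hjτ) (by rw [hjx]; exact hylex) hSτ'
    obtain ⟨hjg, hgτ, hSg, hafter⟩ := h1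
    set g := Nat.findGreatest (fun u => y ≤ S u) τ with hg
    have hfj : f j = g := by simp only [hf, dif_pos hex', ← hτ, ← hg]
    rw [hfj]
    refine ⟨by omega, hSg, ?_⟩
    -- find the hit of y - m in (g, τ]
    have hSτ'' : S τ < y - m := by push_cast at hSτ; omega
    have hSgge : y - (m : ℤ) ≤ S g := by omega
    have h2 := lastHit S hS (le_of_lt hgτ) hSgge hSτ''
    obtain ⟨hgg', hg'τ, hSg', _⟩ := h2
    set g' := Nat.findGreatest (fun u => y - (m : ℤ) ≤ S u) τ with hg'
    have hgne : g ≠ g' := by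
      intro h; rw [← h] at hSg'; omega
    refine ⟨g', lt_of_le_of_ne hgg' hgne, by omega, by rw [hSg'], ?_⟩
    intro u hu1 hu2
    have : S u < y := hafter u hu1 (by omega)
    omega
  · -- injective on the set
    have key : ∀ j ∈ (Finset.range (n + 1)).filter (fun j =>
        S j = x ∧ ∃ t, j < t ∧ t ≤ n ∧ S t = x - ((2 * m : ℕ) : ℤ) ∧
          ∀ u, j < u → u < t → S u ≠ x),
        ∀ j' ∈ (Finset.range (n + 1)).filter (fun j =>
        S j = x ∧ ∃ t, j < t ∧ t ≤ n ∧ S t = x - ((2 * m : ℕ) : ℤ) ∧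
          ∀ u, j < u → u < t → S u ≠ x), j < j' → f j < f j' := by
      intro j hj j' hj' hlt
      simp only [Finset.mem_filter, Finset.mem_range] at hj hj'
      obtain ⟨hjn, hjx, hex⟩ := hj
      obtain ⟨hjn', hjx', hex'⟩ := hj'
      have hexP : ∃ t, P j t := hex
      have hexP' : ∃ t, P j' t := hex'
      set τ := Nat.find hexP with hτ
      obtain ⟨hjτ, hτn, hSτ, hnoret⟩ : P j τ := Nat.find_spec hexP
      set τ' := Nat.find hexP' with hτ'
      obtain ⟨hjτ', hτn', hSτ', hnoret'⟩ : P j' τ' := Nat.find_spec hexP'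
      have hfj : f j = Nat.findGreatest (fun u => y ≤ S u) τ := by
        simp only [hf, dif_pos hexP, ← hτ]
      have hfj' : f j' = Nat.findGreatest (fun u => y ≤ S u) τ' := by
        simp only [hf, dif_pos hexP', ← hτ']
      have hSτlt : S τ < y := by push_cast at hSτ; omega
      have h1 := lastHit S hS (le_of_lt hjτ) (by rw [hjx]; exact hylex) hSτlt
      -- f j < τ ≤ j' ≤ f j'
      have hfjlt : f j < τ := by rw [hfj]; exact h1.2.1
      have hτj' : τ ≤ j' := by
        by_contra hcon
        push_neg at hcon
        -- j' < τ, j < j', so S j' ≠ x by no-return, unless j' = τ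
        exact hnoret j' hlt hcon hjx'
      have hj'fj' : j' ≤ f j' := by
        rw [hfj']
        exact Nat.le_findGreatest (le_of_lt hjτ') (by rw [hjx']; exact hylex)
      omega
    intro j hj j' hj' hff
    by_contra hne
    rcases lt_or_gt_of_ne hne with h | h
    · exact absurd hff (Nat.ne_of_lt (key j hj j' hj' h))
    · exact absurd hff.symm (Nat.ne_of_lt (key j' hj' j hj h))
end

section
/- Let S be a simple random walk on ℤ and define T(k,n) = k·∑_{x∈ℤ} T(k, kx, n), the weighted count of k-excursions based at points of kℤ. Then for all n and all even k ≥ 2, (1/2)·T(2k, n) ≤ ∑_{x∈ℤ} T(k, x, n) ≤ T(k/2, n). -/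
open scoped Classical ENNReal

/-- `T(k,n) = k ∑_{x ∈ ℤ} T(k, kx, n)`, the weighted count of `k`-excursions based at
points of `kℤ`. -/
noncomputable def excTotal (S : ℕ → ℤ) (k : ℕ) (n : ℕ) : ℝ≥0∞ :=
  (k : ℝ≥0∞) * ∑' x : ℤ, (excCount S k ((k : ℤ) * x) n : ℝ≥0∞)

/-- Excursion-start predicate. -/
def ExcStart (S : ℕ → ℤ) (k : ℕ) (x : ℤ) (n : ℕ) (j : ℕ) : Prop :=
  S j = x ∧ ∃ t, j < t ∧ t ≤ n ∧ S t = x - (k : ℤ) ∧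
    ∀ u, j < u → u < t → S u ≠ x

lemma excCount_eq (S : ℕ → ℤ) (k : ℕ) (x : ℤ) (n : ℕ) :
    excCount S k x n = ((Finset.range (n + 1)).filter (ExcStart S k x n)).card := by
  unfold excCount
  congr 1
  ext j
  simp only [Finset.mem_filter, ExcStart]

lemma step_bound (S : ℕ → ℤ) (hS : ∀ t, (S (t + 1) - S t).natAbs = 1) (t : ℕ) :
    S t - 1 ≤ S (t + 1) ∧ S (t + 1) ≤ S t + 1 := by
  have h := hS t
  rcases Int.natAbs_eq_iff.mp h with h' | h' <;> constructor <;> omega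

lemma construct (S : ℕ → ℤ) (hS : ∀ t, (S (t + 1) - S t).natAbs = 1)
    {k K : ℕ} (hK : 1 ≤ K) {x z : ℤ} {n j t : ℕ}
    (hj : S j = x) (hjt : j < t) (htn : t ≤ n) (hst : S t = x - (k : ℤ))
    (hnr : ∀ u, j < u → u < t → S u ≠ x)
    (hzx : z ≤ x) (hzk : x - (k : ℤ) ≤ z - (K : ℤ)) :
    ∃ j', j ≤ j' ∧ j' < t ∧ ExcStart S K z n j' ∧
      ∀ u, j < u → u ≤ j' → S u ≠ x := by
  classical
  have hex : ∃ u, j < u ∧ S u ≤ z - (K : ℤ) := ⟨t, hjt, by rw [hst]; exact hzk⟩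
  set τ := Nat.find hex with hτdef
  have hτ1 : j < τ ∧ S τ ≤ z - (K : ℤ) := Nat.find_spec hex
  have hτt : τ ≤ t := Nat.find_min' hex ⟨hjt, by rw [hst]; exact hzk⟩
  obtain ⟨p, hp⟩ : ∃ p, τ = p + 1 := ⟨τ - 1, by omega⟩
  have hjp : j ≤ p := by omega
  have hSp : z - (K : ℤ) < S p := by
    rcases eq_or_lt_of_le hjp with h | h
    · rw [← h, hj]; omega
    · have hmin := Nat.find_min hex (show p < τ by omega)
      push_neg at hmin
      exact hmin h
  have hSτ : S τ = z - (K : ℤ) := by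
    have hb := step_bound S hS p
    have he : S τ = S (p + 1) := by rw [hp]
    omega
  -- find the last visit to level z before τ
  have hjτ : j ≤ τ - 1 := by omega
  have hPj : j ≤ j ∧ z ≤ S j := ⟨le_refl j, by rw [hj]; exact hzx⟩
  set j' := Nat.findGreatest (fun u => j ≤ u ∧ z ≤ S u) (τ - 1) with hj'def
  have hjj' : j ≤ j' := Nat.le_findGreatest hjτ hPj
  have hPj' : j ≤ j' ∧ z ≤ S j' :=
    Nat.findGreatest_spec (P := fun u => j ≤ u ∧ z ≤ S u) hjτ hPj
  have hj'τ : j' ≤ τ - 1 := Nat.findGreatest_le _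
  have hmax : ∀ u, j' < u → u ≤ τ - 1 → S u < z := by
    intro u h1 h2
    have hng := Nat.findGreatest_is_greatest (P := fun u => j ≤ u ∧ z ≤ S u) h1 h2
    by_contra hc
    push_neg at hc
    exact hng ⟨by omega, hc⟩
  have hSj' : S j' = z := by
    have hb := step_bound S hS j'
    have h1 : S (j' + 1) ≤ z - 1 := by
      rcases lt_or_eq_of_le (show j' + 1 ≤ τ by omega) with h | h
      · have := hmax (j' + 1) (by omega) (by omega); omega
      · rw [h, hSτ]; omega
    omega
  refine ⟨j', hjj', by omega, ⟨hSj', τ, by omega, le_trans hτt htn, hSτ, ?_⟩, ?_⟩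
  · intro u hu1 hu2
    have := hmax u hu1 (by omega)
    omega
  · intro u hu1 hu2
    exact hnr u hu1 (by omega)

lemma start_unique {S : ℕ → ℤ} {x : ℤ} {j₁ j₂ j' : ℕ}
    (e1 : S j₁ = x) (e2 : S j₂ = x) (h1 : j₁ ≤ j') (h2 : j₂ ≤ j')
    (p1 : ∀ u, j₁ < u → u ≤ j' → S u ≠ x)
    (p2 : ∀ u, j₂ < u → u ≤ j' → S u ≠ x) : j₁ = j₂ := by
  rcases lt_trichotomy j₁ j₂ with h | h | h
  · exact absurd e2 (p1 j₂ h h2)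
  · exact h
  · exact absurd e1 (p2 j₁ h h1)

lemma claim2_nat (S : ℕ → ℤ) (hS : ∀ t, (S (t + 1) - S t).natAbs = 1)
    (m n : ℕ) (hm : 1 ≤ m) (A B : Finset ℤ)
    (hB : ∀ y : ℤ, (m : ℤ) * y ∈ Finset.image S (Finset.range (n + 1)) → y ∈ B) :
    ∑ x ∈ A, excCount S (2 * m) x n ≤ m * ∑ y ∈ B, excCount S m ((m : ℤ) * y) n := by
  classical
  have hm0 : (m : ℤ) ≠ 0 := by positivity
  set E : ℕ → ℤ → Finset ℕ := fun k x => (Finset.range (n + 1)).filter (ExcStart S k x n)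
    with hE
  set s : Finset (Σ _ : ℤ, ℕ) := A.sigma (fun x => E (2 * m) x) with hs
  set tt : Finset (Σ _ : ℤ, ℕ) := B.sigma (fun y => E m ((m : ℤ) * y)) with htt
  set Q : ℤ → ℕ → ℕ → Prop := fun x j j' =>
    j ≤ j' ∧ ExcStart S m ((m : ℤ) * (x / m)) n j' ∧ ∀ u, j < u → u ≤ j' → S u ≠ x with hQdef
  have hQ : ∀ x j, ExcStart S (2 * m) x n j → ∃ j', Q x j j' := by
    intro x j hj
    obtain ⟨hSj, t, ht1, ht2, ht3, ht4⟩ := hj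
    have e1 : (m : ℤ) * (x / m) + x % m = x := Int.mul_ediv_add_emod x m
    have e2 : 0 ≤ x % m := Int.emod_nonneg x hm0
    have e3 : x % m < m := Int.emod_lt_of_pos x (by exact_mod_cast hm)
    obtain ⟨j', h1, h2, h3, h4⟩ := construct S hS (z := (m : ℤ) * (x / m)) hm hSj ht1 ht2 ht3 ht4
      (by linarith) (by push_cast; linarith)
    exact ⟨j', h1, h3, h4⟩
  set F : (Σ _ : ℤ, ℕ) → (Σ _ : ℤ, ℕ) := fun p =>
    if h : ∃ j', Q p.1 p.2 j' then ⟨p.1 / m, h.choose⟩ else ⟨p.1 / m, 0⟩ with hF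
  have hF1 : ∀ p, (F p).1 = p.1 / m := by
    intro p; rw [hF]; dsimp only; split <;> rfl
  have hsmem : ∀ p ∈ s, ExcStart S (2 * m) p.1 n p.2 := by
    intro p hp
    rw [hs, Finset.mem_sigma] at hp
    exact (Finset.mem_filter.mp hp.2).2
  have hFspec : ∀ p ∈ s, Q p.1 p.2 (F p).2 := by
    intro p hp
    have h := hQ p.1 p.2 (hsmem p hp)
    rw [hF]; dsimp only; rw [dif_pos h]
    exact h.choose_spec
  have himg : s.image F ⊆ tt := by
    intro b hb
    obtain ⟨p, hp, rfl⟩ := Finset.mem_image.mp hb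
    have hQp := hFspec p hp
    have hex : ExcStart S m ((m : ℤ) * (p.1 / m)) n (F p).2 := hQp.2.1
    have hb2 : (F p).2 < n + 1 := by
      obtain ⟨_, t, ht1, ht2, _, _⟩ := hex; omega
    rw [htt, Finset.mem_sigma]
    constructor
    · rw [hF1 p]
      apply hB
      rw [Finset.mem_image]
      exact ⟨(F p).2, Finset.mem_range.mpr hb2, hex.1⟩
    · rw [hE]; dsimp only
      rw [Finset.mem_filter]
      refine ⟨Finset.mem_range.mpr hb2, ?_⟩
      rw [hF1 p]
      exact hex
  have hfib : ∀ b ∈ s.image F, (s.filter fun p => F p = b).card ≤ m := by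
    intro b _
    have hcard : (s.filter fun p => F p = b).card ≤
        (Finset.Ico ((m : ℤ) * b.1) ((m : ℤ) * b.1 + m)).card := by
      apply Finset.card_le_card_of_injOn (fun p => p.1)
      · intro p hp
        rw [Finset.mem_coe, Finset.mem_filter] at hp
        have h2 : p.1 / m = b.1 := by rw [← hF1 p, hp.2]
        have e1 : (m : ℤ) * (p.1 / m) + p.1 % m = p.1 := Int.mul_ediv_add_emod p.1 m
        have e2 : 0 ≤ p.1 % m := Int.emod_nonneg p.1 hm0
        have e3 : p.1 % m < m := Int.emod_lt_of_pos p.1 (by exact_mod_cast hm)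
        rw [h2] at e1
        rw [Finset.mem_coe, Finset.mem_Ico]
        constructor <;> linarith
      · intro p hp q hq hpq
        replace hpq : p.1 = q.1 := hpq
        simp only [Finset.coe_filter, Set.mem_setOf_eq] at hp hq
        obtain ⟨hps, hpF⟩ := hp
        obtain ⟨hqs, hqF⟩ := hq
        have hQp := hFspec p hps
        have hQq := hFspec q hqs
        have hp2 : (F p).2 = b.2 := by rw [hpF]
        have hq2 : (F q).2 = b.2 := by rw [hqF]
        rw [hp2] at hQp
        rw [hq2] at hQq
        have e1 : S p.2 = p.1 := (hsmem p hps).1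
        have e2 : S q.2 = p.1 := by rw [(hsmem q hqs).1, ← hpq]
        have h22 : p.2 = q.2 := by
          refine start_unique e1 e2 hQp.1 hQq.1 hQp.2.2 ?_
          intro u hu1 hu2
          rw [hpq]
          exact hQq.2.2 u hu1 hu2
        exact Sigma.ext hpq (heq_of_eq h22)
    calc (s.filter fun p => F p = b).card
        ≤ (Finset.Ico ((m : ℤ) * b.1) ((m : ℤ) * b.1 + m)).card := hcard
      _ = m := by rw [Int.card_Ico, add_sub_cancel_left]; simp
  have h1 : s.card ≤ m * (s.image F).card := Finset.card_le_mul_card_image s m hfib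
  have h2 : (s.image F).card ≤ tt.card := Finset.card_le_card himg
  have hs' : s.card = ∑ x ∈ A, excCount S (2 * m) x n := by
    rw [hs, Finset.card_sigma]
    exact Finset.sum_congr rfl fun x _ => (excCount_eq S (2 * m) x n).symm
  have ht' : tt.card = ∑ y ∈ B, excCount S m ((m : ℤ) * y) n := by
    rw [htt, Finset.card_sigma]
    exact Finset.sum_congr rfl fun y _ => (excCount_eq S m ((m : ℤ) * y) n).symm
  calc ∑ x ∈ A, excCount S (2 * m) x n = s.card := hs'.symm
    _ ≤ m * (s.image F).card := h1
    _ ≤ m * tt.card := Nat.mul_le_mul_left m h2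
    _ = m * ∑ y ∈ B, excCount S m ((m : ℤ) * y) n := by rw [ht']

lemma claim1_nat (S : ℕ → ℤ) (hS : ∀ t, (S (t + 1) - S t).natAbs = 1)
    (m n : ℕ) (hm : 1 ≤ m) (A B : Finset ℤ)
    (hB : ∀ z : ℤ, z ∈ Finset.image S (Finset.range (n + 1)) → z ∈ B) :
    (2 * m) * ∑ x ∈ A, excCount S (2 * (2 * m)) (((2 * (2 * m) : ℕ) : ℤ) * x) n
      ≤ ∑ z ∈ B, excCount S (2 * m) z n := by
  classical
  set c : ℤ := ((2 * (2 * m) : ℕ) : ℤ) with hc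
  have hc0 : (0 : ℤ) < c := by rw [hc]; positivity
  set E : ℕ → ℤ → Finset ℕ := fun k x => (Finset.range (n + 1)).filter (ExcStart S k x n)
    with hE
  set s1 : Finset (Σ _ : ℤ, ℕ) := A.sigma (fun x => E (2 * (2 * m)) (c * x)) with hs1
  set s : Finset ((Σ _ : ℤ, ℕ) × ℕ) := s1 ×ˢ Finset.range (2 * m) with hs
  set tt : Finset (Σ _ : ℤ, ℕ) := B.sigma (fun z => E (2 * m) z) with htt
  set Q : ℤ → ℤ → ℕ → ℕ → Prop := fun X z j j' =>
    j ≤ j' ∧ ExcStart S (2 * m) z n j' ∧ ∀ u, j < u → u ≤ j' → S u ≠ X with hQdef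
  have hQ : ∀ (X : ℤ) (i : ℕ), i < 2 * m → ∀ j, ExcStart S (2 * (2 * m)) X n j →
      ∃ j', Q X (X - i) j j' := by
    intro X i hi j hj
    obtain ⟨hSj, t, ht1, ht2, ht3, ht4⟩ := hj
    have hi' : (i : ℤ) < (2 * m : ℕ) := by exact_mod_cast hi
    have hi0 : (0 : ℤ) ≤ (i : ℤ) := Int.ofNat_nonneg i
    obtain ⟨j', h1, h2, h3, h4⟩ := construct S hS (K := 2 * m) (z := X - i)
      (by omega) hSj ht1 ht2 ht3 ht4 (by linarith) (by push_cast; linarith)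
    exact ⟨j', h1, h3, h4⟩
  set G : ((Σ _ : ℤ, ℕ) × ℕ) → (Σ _ : ℤ, ℕ) := fun q =>
    if h : ∃ j', Q (c * q.1.1) (c * q.1.1 - q.2) q.1.2 j' then ⟨c * q.1.1 - q.2, h.choose⟩
    else ⟨c * q.1.1 - q.2, 0⟩ with hG
  have hG1 : ∀ q, (G q).1 = c * q.1.1 - q.2 := by
    intro q; rw [hG]; dsimp only; split <;> rfl
  have hsmem : ∀ q ∈ s, ExcStart S (2 * (2 * m)) (c * q.1.1) n q.1.2 ∧ q.2 < 2 * m := by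
    intro q hq
    rw [hs, Finset.mem_product] at hq
    obtain ⟨hq1, hq2⟩ := hq
    rw [hs1, Finset.mem_sigma] at hq1
    exact ⟨(Finset.mem_filter.mp hq1.2).2, Finset.mem_range.mp hq2⟩
  have hGspec : ∀ q ∈ s, Q (c * q.1.1) (c * q.1.1 - q.2) q.1.2 (G q).2 := by
    intro q hq
    obtain ⟨hex, hi⟩ := hsmem q hq
    have h := hQ (c * q.1.1) q.2 hi q.1.2 hex
    rw [hG]; dsimp only; rw [dif_pos h]
    exact h.choose_spec
  have hmaps : ∀ q ∈ s, G q ∈ tt := by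
    intro q hq
    have hQq := hGspec q hq
    have hex : ExcStart S (2 * m) (c * q.1.1 - q.2) n (G q).2 := hQq.2.1
    have hb2 : (G q).2 < n + 1 := by
      obtain ⟨_, t, ht1, ht2, _, _⟩ := hex; omega
    rw [htt, Finset.mem_sigma]
    constructor
    · rw [hG1 q]
      apply hB
      rw [Finset.mem_image]
      exact ⟨(G q).2, Finset.mem_range.mpr hb2, hex.1⟩
    · rw [hE]; dsimp only
      rw [Finset.mem_filter]
      refine ⟨Finset.mem_range.mpr hb2, ?_⟩
      rw [hG1 q]
      exact hex
  have hinj : Set.InjOn G s := by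
    intro p hp q hq hpq
    rw [Finset.mem_coe] at hp hq
    have h1 : (G p).1 = (G q).1 := by rw [hpq]
    rw [hG1 p, hG1 q] at h1
    have hip := (hsmem p hp).2
    have hiq := (hsmem q hq).2
    -- c divides (i₁ - i₂)
    have hdvd : c ∣ ((p.2 : ℤ) - (q.2 : ℤ)) := ⟨p.1.1 - q.1.1, by ring_nf; linarith [h1]⟩
    have habs : |(p.2 : ℤ) - (q.2 : ℤ)| < c := by
      rw [abs_lt]
      have h1' : (p.2 : ℤ) < (2 * m : ℕ) := by exact_mod_cast hip
      have h2' : (q.2 : ℤ) < (2 * m : ℕ) := by exact_mod_cast hiq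
      have h3' : (0 : ℤ) ≤ (p.2 : ℤ) := Int.ofNat_nonneg _
      have h4' : (0 : ℤ) ≤ (q.2 : ℤ) := Int.ofNat_nonneg _
      have hcv : c = ((2 * (2 * m) : ℕ) : ℤ) := hc
      constructor <;> [push_cast at hcv ⊢; push_cast at hcv ⊢] <;> push_cast at h1' h2' <;> linarith
    have hii : p.2 = q.2 := by
      have := Int.eq_zero_of_abs_lt_dvd hdvd habs
      omega
    have hxx : p.1.1 = q.1.1 := by
      have hcx : c * p.1.1 = c * q.1.1 := by
        rw [hii] at h1; linarith
      exact mul_left_cancel₀ (ne_of_gt hc0) hcx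
    have hQp := hGspec p hp
    have hQq := hGspec q hq
    have h2 : (G p).2 = (G q).2 := by rw [hpq]
    rw [h2] at hQp
    have e1 : S p.1.2 = c * p.1.1 := (hsmem p hp).1.1
    have e2 : S q.1.2 = c * p.1.1 := by rw [(hsmem q hq).1.1, hxx]
    have hjj : p.1.2 = q.1.2 := by
      refine start_unique e1 e2 hQp.1 hQq.1 ?_ ?_
      · intro u hu1 hu2
        exact hQp.2.2 u hu1 hu2
      · intro u hu1 hu2
        rw [hxx]
        exact hQq.2.2 u hu1 hu2
    have hfst : p.1 = q.1 := Sigma.ext hxx (heq_of_eq hjj)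
    exact Prod.ext hfst hii
  have hcards : s.card ≤ tt.card := Finset.card_le_card_of_injOn G hmaps hinj
  have hscard : s.card = (∑ x ∈ A, excCount S (2 * (2 * m)) (c * x) n) * (2 * m) := by
    rw [hs, Finset.card_product, Finset.card_range, hs1, Finset.card_sigma]
    congr 1
    exact Finset.sum_congr rfl fun x _ => (excCount_eq S (2 * (2 * m)) (c * x) n).symm
  have htcard : tt.card = ∑ z ∈ B, excCount S (2 * m) z n := by
    rw [htt, Finset.card_sigma]
    exact Finset.sum_congr rfl fun z _ => (excCount_eq S (2 * m) z n).symm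
  calc (2 * m) * ∑ x ∈ A, excCount S (2 * (2 * m)) (c * x) n
      = (∑ x ∈ A, excCount S (2 * (2 * m)) (c * x) n) * (2 * m) := Nat.mul_comm _ _
    _ = s.card := hscard.symm
    _ ≤ tt.card := hcards
    _ = ∑ z ∈ B, excCount S (2 * m) z n := htcard

lemma excCount_eq_zero (S : ℕ → ℤ) (k : ℕ) (x : ℤ) (n : ℕ)
    (h : x ∉ Finset.image S (Finset.range (n + 1))) : excCount S k x n = 0 := by
  rw [excCount_eq, Finset.card_eq_zero, Finset.filter_eq_empty_iff]
  intro j hj hx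
  exact h (Finset.mem_image.mpr ⟨j, hj, hx.1⟩)

/-- For every nearest-neighbor path on `ℤ`, every `n` and every even `k = 2m ≥ 2`:
`(1/2)·T(2k, n) ≤ ∑_{x ∈ ℤ} T(k, x, n) ≤ T(k/2, n)`. -/
theorem excTotal_sandwich (S : ℕ → ℤ) (hS : ∀ t, (S (t + 1) - S t).natAbs = 1)
    (m n : ℕ) (hm : 1 ≤ m) :
    excTotal S (2 * (2 * m)) n ≤ 2 * ∑' x : ℤ, (excCount S (2 * m) x n : ℝ≥0∞) ∧
    ∑' x : ℤ, (excCount S (2 * m) x n : ℝ≥0∞) ≤ excTotal S m n := by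
  classical
  set A : Finset ℤ := Finset.image S (Finset.range (n + 1)) with hA
  have hsum2m : ∑' x : ℤ, (excCount S (2 * m) x n : ℝ≥0∞)
      = ((∑ x ∈ A, excCount S (2 * m) x n : ℕ) : ℝ≥0∞) := by
    rw [Nat.cast_sum]
    apply tsum_eq_sum
    intro b hb
    rw [excCount_eq_zero S _ b n hb]
    simp
  have hgen : ∀ c : ℕ, 1 ≤ c →
      ∑' x : ℤ, (excCount S c ((c : ℤ) * x) n : ℝ≥0∞)
      = ((∑ x ∈ A.image (fun z => z / (c : ℤ)), excCount S c ((c : ℤ) * x) n : ℕ) : ℝ≥0∞) := by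
    intro c hc
    have hc0 : (c : ℤ) ≠ 0 := by positivity
    rw [Nat.cast_sum]
    apply tsum_eq_sum
    intro b hb
    by_cases hmem : (c : ℤ) * b ∈ A
    · exact absurd (Finset.mem_image.mpr ⟨(c : ℤ) * b, hmem, Int.mul_ediv_cancel_left (a := (c : ℤ)) b hc0⟩) hb
    · rw [excCount_eq_zero S _ _ n hmem]
      simp
  constructor
  · -- lower bound
    have key := claim1_nat S hS m n hm (A.image (fun z => z / ((2 * (2 * m) : ℕ) : ℤ))) A
      (fun z hz => hz)
    have key2 : 2 * (2 * m) * ∑ x ∈ A.image (fun z => z / ((2 * (2 * m) : ℕ) : ℤ)),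
        excCount S (2 * (2 * m)) (((2 * (2 * m) : ℕ) : ℤ) * x) n
        ≤ 2 * ∑ x ∈ A, excCount S (2 * m) x n := by
      calc 2 * (2 * m) * ∑ x ∈ A.image (fun z => z / ((2 * (2 * m) : ℕ) : ℤ)),
            excCount S (2 * (2 * m)) (((2 * (2 * m) : ℕ) : ℤ) * x) n
          = 2 * ((2 * m) * ∑ x ∈ A.image (fun z => z / ((2 * (2 * m) : ℕ) : ℤ)),
            excCount S (2 * (2 * m)) (((2 * (2 * m) : ℕ) : ℤ) * x) n) := by ring
        _ ≤ 2 * ∑ x ∈ A, excCount S (2 * m) x n := Nat.mul_le_mul_left 2 key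
    rw [excTotal, hsum2m, hgen (2 * (2 * m)) (by omega)]
    exact_mod_cast key2
  · -- upper bound
    have key := claim2_nat S hS m n hm A (A.image (fun z => z / (m : ℤ)))
      (fun y hy => Finset.mem_image.mpr ⟨(m : ℤ) * y, hy,
        Int.mul_ediv_cancel_left (a := (m : ℤ)) y (by positivity)⟩)
    rw [excTotal, hsum2m, hgen m hm]
    exact_mod_cast key
end

section
/- Let S be a nearest-neighbor path on ℤ and T(k,n) = k·∑_{x∈ℤ} T(k,kx,n). If k, k' are positive integers with 2k ≤ k', then T(k', n) ≤ 3·T(k, n). -/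
/-!
A `k'`-excursion from `k'x` descends from `k'x` to `k'x - k'`, so for every multiple `y` of `k`
in `[k'x - k' + k, k'x]` (there are at least `k'/k - 1` of them) it contains a `k`-excursion
from `y`, starting at its last visit to `y`. The level `y` and the starting time of this
`k`-excursion determine the `k'`-excursion: `y` determines `x`, and the `k'`-excursions from the
same point occupy disjoint time windows. Hence `(k'/k - 1) · #{k'-excursions} ≤ #{k-excursions}`,
and `k' ≤ 3k (k'/k - 1)` once `2k ≤ k'`.
-/

open scoped Classical ENNReal

def IsExcursion (S : ℕ → ℤ) (K n : ℕ) (x : ℤ) (j : ℕ) : Prop :=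
  S j = x ∧ ∃ t, j < t ∧ t ≤ n ∧ S t = x - K ∧ ∀ u, j < u → u < t → S u ≠ x

/-- A `K`-excursion from a point of `Kℤ` completed by time `n`, recorded as `⟨x, j⟩` when it
starts from `K x` at time `j`. -/
abbrev Excursions (S : ℕ → ℤ) (K n : ℕ) : Type :=
  Σ x : ℤ, {j : ℕ // IsExcursion S K n (K * x) j}

lemma excCount_eq_natCard (S : ℕ → ℤ) (K : ℕ) (x : ℤ) (n : ℕ) :
    excCount S K x n = Nat.card {j // IsExcursion S K n x j} := by
  rw [excCount, ← Nat.card_eq_finsetCard]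
  refine Nat.card_congr (Equiv.subtypeEquivRight fun j => ?_)
  simp only [Finset.mem_filter, Finset.mem_range, IsExcursion]
  refine ⟨And.right, fun h => ⟨?_, h⟩⟩
  obtain ⟨-, t, hjt, htn, -⟩ := h
  omega

lemma finite_setOf_isExcursion (S : ℕ → ℤ) (K n : ℕ) (x : ℤ) :
    {j | IsExcursion S K n x j}.Finite :=
  (Set.finite_Iic n).subset fun _ ⟨_, _, hjt, htn, _⟩ => (hjt.trans_le htn).le

lemma excTotal_eq_mul_card (S : ℕ → ℤ) (K n : ℕ) :
    excTotal S K n = K * ENat.card (Excursions S K n) := by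
  rw [excTotal, ← ENNReal.tsum_one, ENNReal.tsum_sigma']
  congr 1
  refine tsum_congr fun x => ?_
  have : Finite {j // IsExcursion S K n (K * x) j} := (finite_setOf_isExcursion S K n _).to_subtype
  rw [ENNReal.tsum_one, excCount_eq_natCard, ENat.card_eq_coe_natCard]
  rfl

lemma exists_last_visit {S : ℕ → ℤ} (hS : ∀ t, S t ≤ S (t + 1) + 1) {y : ℤ} {a b : ℕ}
    (hab : a ≤ b) (ha : y ≤ S a) (hb : S b < y) :
    ∃ w, a ≤ w ∧ w < b ∧ S w = y ∧ ∀ u, w < u → u ≤ b → S u < y := by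
  induction b, hab using Nat.le_induction with
  | base => omega
  | succ b hab ih =>
    by_cases hSb : S b < y
    · obtain ⟨w, haw, hwb, hw, hlast⟩ := ih hSb
      refine ⟨w, haw, by omega, hw, fun u hwu hub => ?_⟩
      rcases hub.lt_or_eq with hub | rfl
      exacts [hlast u hwu (by omega), hb]
    · refine ⟨b, hab, b.lt_succ_self, by linarith [hS b], fun u hbu hub => ?_⟩
      rwa [show u = b + 1 by omega]

lemma exists_eq_of_le_of_le {S : ℕ → ℤ} (hS : ∀ t, S t ≤ S (t + 1) + 1) {y : ℤ} {a b : ℕ}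
    (hab : a ≤ b) (ha : y ≤ S a) (hb : S b ≤ y) : ∃ u, a ≤ u ∧ u ≤ b ∧ S u = y := by
  rcases hb.lt_or_eq with hb | hb
  · obtain ⟨w, haw, hwb, hw, -⟩ := exists_last_visit hS hab ha hb
    exact ⟨w, haw, hwb.le, hw⟩
  · exact ⟨b, hab, le_rfl, hb⟩

/-- The excursion starts at the last visit to `y` before time `t`. -/
lemma exists_isExcursion_of_descent {S : ℕ → ℤ} (hS : ∀ t, S t ≤ S (t + 1) + 1)
    {K n j t : ℕ} {y : ℤ} (hK : 0 < K) (hjt : j ≤ t) (htn : t ≤ n) (hj : y ≤ S j)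
    (ht : S t ≤ y - K) : ∃ w, j ≤ w ∧ w < t ∧ IsExcursion S K n y w := by
  obtain ⟨w, hjw, hwt, hw, hlast⟩ := exists_last_visit hS hjt hj (by omega)
  obtain ⟨v, hwv, hvt, hv⟩ := exists_eq_of_le_of_le hS hwt.le (by omega) ht
  refine ⟨w, hjw, hwt, hw, v, ?_, hvt.trans htn, hv, fun u hwu huv => (hlast u hwu (by omega)).ne⟩
  rcases hwv.lt_or_eq with h | rfl
  exacts [h, by omega]

lemma start_eq_of_mem_window {S : ℕ → ℤ} {x : ℤ} {j j' t t' w : ℕ}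
    (hj : S j = x) (hj' : S j' = x) (hjw : j ≤ w) (hj'w : j' ≤ w) (hwt : w < t) (hwt' : w < t')
    (ht : ∀ u, j < u → u < t → S u ≠ x) (ht' : ∀ u, j' < u → u < t' → S u ≠ x) : j = j' := by
  rcases lt_trichotomy j j' with h | h | h
  · exact absurd hj' (ht j' h (by omega))
  · exact h
  · exact absurd hj (ht' j h (by omega))

lemma eq_of_mem_Ioc_mul {K : ℤ} (hK : 0 < K) {x x' y : ℤ} (hx : y ∈ Set.Ioc (K * x - K) (K * x))
    (hx' : y ∈ Set.Ioc (K * x' - K) (K * x')) : x = x' := by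
  obtain ⟨h1, h2⟩ := hx
  obtain ⟨h1', h2'⟩ := hx'
  have : x < x' + 1 := lt_of_mul_lt_mul_left (by linarith) hK.le
  have : x' < x + 1 := lt_of_mul_lt_mul_left (by linarith) hK.le
  omega

lemma mul_ediv_sub_mem_Icc {k k' : ℕ} {i : ℕ} (hi : i + 2 ≤ k' / k) (a : ℤ) :
    k * (a / k - i) ∈ Set.Icc (a - k' + k) a := by
  have hk : (0 : ℤ) < k := by
    rcases Nat.eq_zero_or_pos k with rfl | h
    · simp at hi
    · exact_mod_cast h
  have hdiv : k * (k' / k) ≤ k' := Nat.mul_div_le k' k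
  have hi' : (k : ℤ) * (i + 2) ≤ k' := by exact_mod_cast (Nat.mul_le_mul_left k hi).trans hdiv
  have := Int.mul_ediv_self_le (x := a) hk.ne'
  have := Int.lt_mul_ediv_self_add (x := a) hk
  constructor <;> nlinarith

lemma IsExcursion.exists_isExcursion_of_mem_Icc {S : ℕ → ℤ} (hS : ∀ t, S t ≤ S (t + 1) + 1)
    {K k n j : ℕ} {x y : ℤ} (hj : IsExcursion S K n x j) (hk : 0 < k)
    (hy : y ∈ Set.Icc (x - K + k) x) :
    ∃ w t, j ≤ w ∧ w < t ∧ (∀ u, j < u → u < t → S u ≠ x) ∧ IsExcursion S k n y w := by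
  obtain ⟨hjx, t, hjt, htn, ht, hvisit⟩ := hj
  obtain ⟨w, hjw, hwt, hw⟩ :=
    exists_isExcursion_of_descent hS hk hjt.le htn (hy.2.trans hjx.ge) (by rw [ht]; linarith [hy.1])
  exact ⟨w, t, hjw, hwt, hvisit, hw⟩

lemma natCast_mul_card_excursions_le {S : ℕ → ℤ} (hS : ∀ t, S t ≤ S (t + 1) + 1) {k k' n : ℕ}
    (hk : 0 < k) :
    ((k' / k - 1 : ℕ) : ℕ∞) * ENat.card (Excursions S k' n) ≤ ENat.card (Excursions S k n) := by
  have hi : ∀ i : Fin (k' / k - 1), i.1 + 2 ≤ k' / k := fun i => by omega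
  have hnest : ∀ p : Fin (k' / k - 1) × Excursions S k' n, ∃ q : Excursions S k n,
      q.1 = k' * p.2.1 / k - p.1 ∧ ∃ t, p.2.2.1 ≤ q.2.1 ∧ q.2.1 < t ∧
        ∀ u, p.2.2.1 < u → u < t → S u ≠ k' * p.2.1 := by
    rintro ⟨i, x, j, hj⟩
    obtain ⟨w, t, hjw, hwt, hvisit, hw⟩ := hj.exists_isExcursion_of_mem_Icc hS hk
      (mul_ediv_sub_mem_Icc (hi i) (k' * x))
    exact ⟨⟨_, w, hw⟩, rfl, t, hjw, hwt, hvisit⟩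
  choose f hf using hnest
  calc ((k' / k - 1 : ℕ) : ℕ∞) * ENat.card (Excursions S k' n)
      = ENat.card (Fin (k' / k - 1) × Excursions S k' n) := by simp [ENat.card_prod]
    _ ≤ ENat.card (Excursions S k n) := ENat.card_le_card_of_injective (f := f) ?_
  rintro ⟨i, x, j, hj⟩ ⟨i', x', j', hj'⟩ hff
  obtain ⟨hm, t, hjw, hwt, ht⟩ := hf (i, ⟨x, j, hj⟩)
  obtain ⟨hm', t', hjw', hwt', ht'⟩ := hf (i', ⟨x', j', hj'⟩)
  dsimp only at hm hm' hjw hjw' hwt hwt' ht ht'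
  rw [hff] at hm hjw hwt
  have level_mem : ∀ (i : Fin (k' / k - 1)) (x : ℤ),
      (k : ℤ) * (k' * x / k - i) ∈ Set.Ioc ((k' : ℤ) * x - k') (k' * x) := fun i x => by
    obtain ⟨h1, h2⟩ := mul_ediv_sub_mem_Icc (hi i) (k' * x)
    exact ⟨by omega, h2⟩
  have hx : x = x' := eq_of_mem_Ioc_mul (by obtain ⟨h1, h2⟩ := level_mem i x; omega)
    (hm ▸ level_mem i x) (hm' ▸ level_mem i' x')
  subst hx
  obtain rfl : i = i' := Fin.ext (by omega)
  obtain rfl := start_eq_of_mem_window hj.1 hj'.1 hjw hjw' hwt hwt' ht ht'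
  rfl

lemma le_three_mul_mul_div_sub_one {k k' : ℕ} (hk : 0 < k) (hkk' : 2 * k ≤ k') :
    k' ≤ 3 * k * (k' / k - 1) := by
  have hq : 2 ≤ k' / k := (Nat.le_div_iff_mul_le hk).mpr (by omega)
  have hlt : k' < k * (k' / k + 1) := Nat.lt_mul_div_succ k' hk
  obtain ⟨r, hr⟩ : ∃ r, k' / k = r + 2 := ⟨k' / k - 2, by omega⟩
  rw [hr] at hlt ⊢
  rw [show r + 2 - 1 = r + 1 by omega]
  nlinarith

/-- Almost-monotonicity of `T(k,n)`: if `2k ≤ k'` then `T(k', n) ≤ 3 T(k, n)`, for every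
nearest-neighbor path on `ℤ`. -/
theorem excTotal_almost_monotone (S : ℕ → ℤ) (hS : ∀ t, (S (t + 1) - S t).natAbs = 1)
    (k k' n : ℕ) (hk : 1 ≤ k) (hkk' : 2 * k ≤ k') :
    excTotal S k' n ≤ 3 * excTotal S k n := by
  have hS' : ∀ t, S t ≤ S (t + 1) + 1 := fun t => by have := hS t; omega
  have hcard : ((k' / k - 1 : ℕ) : ℝ≥0∞) * ENat.card (Excursions S k' n) ≤
      ENat.card (Excursions S k n) := by
    simpa only [ENat.toENNReal_mul, ENat.toENNReal_coe] using
      ENat.toENNReal_le.mpr (natCast_mul_card_excursions_le hS' (k' := k') (n := n) hk)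
  have hk' : (k' : ℝ≥0∞) ≤ 3 * k * (k' / k - 1 : ℕ) := by
    exact_mod_cast le_three_mul_mul_div_sub_one hk hkk'
  rw [excTotal_eq_mul_card, excTotal_eq_mul_card]
  calc (k' : ℝ≥0∞) * ENat.card (Excursions S k' n)
      ≤ 3 * k * (k' / k - 1 : ℕ) * ENat.card (Excursions S k' n) := by gcongr
    _ = 3 * (k * ((k' / k - 1 : ℕ) * ENat.card (Excursions S k' n))) := by ring
    _ ≤ 3 * (k * ENat.card (Excursions S k n)) := by gcongr
end

section
/- Let S be a simple random walk on ℤ, fix k ≥ 1, and define stopping times n_0 = 0, n_j = inf{t > n_{j−1} : |S_t − S_{n_{j−1}}| = k}, and N_k(n) = max{j : n_j ≤ n}. For every 0 < r < 1 there exists c > 0 such that for all n, k ≥ 1, P(N_k(n) > c·n/k²) ≤ exp(−r·n/k²). -/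
open scoped Classical ENNReal
open MeasureTheory ProbabilityTheory

/-- The successive stopping times at which the path `S` has moved a net distance `k`
from its previous stopping position: `n₀ = 0`,
`n_j = inf{t > n_{j-1} : |S_t − S_{n_{j-1}}| = k}`. -/
noncomputable def inducedTimes (S : ℕ → ℤ) (k : ℕ) : ℕ → ℕ
  | 0 => 0
  | j + 1 => sInf {t : ℕ | inducedTimes S k j < t ∧ (S t - S (inducedTimes S k j)).natAbs = k}

/-- `N_k(n) = max{j : n_j ≤ n}`, the number of induced steps made by time `n`. -/
noncomputable def numInduced (S : ℕ → ℤ) (k n : ℕ) : ℕ :=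
  ((Finset.range (n + 1)).filter (fun j =>
    0 < j ∧ inducedTimes S k (j - 1) < inducedTimes S k j ∧ inducedTimes S k j ≤ n)).card

/-- `S` is a simple random walk on `ℤ` started at `0` under `μ`. -/
def IsSRW {Ω : Type*} [MeasurableSpace Ω] (μ : Measure Ω) (S : ℕ → Ω → ℤ) : Prop :=
  (∀ ω, S 0 ω = 0) ∧ (∀ n, Measurable (S n)) ∧
  iIndepFun (fun n ω => S (n + 1) ω - S n ω) μ ∧
  (∀ n, μ {ω | S (n + 1) ω - S n ω = 1} = 1 / 2 ∧ μ {ω | S (n + 1) ω - S n ω = -1} = 1 / 2)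


namespace SRWproof


/-- anchored counting process: (current anchor value, number of renewals) -/
def ac (k : ℕ) (p : ℕ → ℤ) : ℕ → ℤ × ℕ
  | 0 => (p 0, 0)
  | t+1 => if k ≤ (p (t+1) - (ac k p t).1).natAbs
           then (p (t+1), (ac k p t).2 + 1) else ac k p t

lemma ac_dist {k : ℕ} (hk : 0 < k) (p : ℕ → ℤ) : ∀ t, (p t - (ac k p t).1).natAbs < k := by
  intro t
  induction t with
  | zero => simpa [ac] using hk
  | succ t _ =>
    by_cases h : k ≤ (p (t+1) - (ac k p t).1).natAbs
    · simp [ac, h, hk]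
    · simp only [ac, if_neg h]
      omega

lemma ac_snd_le (k : ℕ) (p : ℕ → ℤ) : ∀ t, (ac k p t).2 ≤ t := by
  intro t
  induction t with
  | zero => simp [ac]
  | succ t ih =>
    by_cases h : k ≤ (p (t+1) - (ac k p t).1).natAbs
    · simp only [ac, if_pos h]; omega
    · simp only [ac, if_neg h]; omega

lemma ac_congr {k : ℕ} {p q : ℕ → ℤ} : ∀ t, (∀ u, u ≤ t → p u = q u) → ac k p t = ac k q t := by
  intro t
  induction t with
  | zero => intro h; simp [ac, h 0 (le_refl 0)]
  | succ t ih =>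
    intro h
    have h' : ac k p t = ac k q t := ih (fun u hu => h u (Nat.le_succ_of_le hu))
    simp only [ac, h', h (t+1) le_rfl]



variable {k : ℕ} {p : ℕ → ℤ}

lemma it_succ (hesc : ∀ a, ∃ u, a < u ∧ (p u - p a).natAbs = k) (j : ℕ) :
    inducedTimes p k j < inducedTimes p k (j+1) ∧
      (p (inducedTimes p k (j+1)) - p (inducedTimes p k j)).natAbs = k := by
  have hne : {t : ℕ | inducedTimes p k j < t ∧ (p t - p (inducedTimes p k j)).natAbs = k}.Nonempty := by
    obtain ⟨u, hu1, hu2⟩ := hesc (inducedTimes p k j)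
    exact ⟨u, hu1, hu2⟩
  have := Nat.sInf_mem hne
  exact this

lemma it_mono (hesc : ∀ a, ∃ u, a < u ∧ (p u - p a).natAbs = k) :
    StrictMono (inducedTimes p k) :=
  strictMono_nat_of_lt_succ (fun j => (it_succ hesc j).1)

lemma ac_spec (hk : 0 < k) (hstep : ∀ t, (p (t+1) - p t).natAbs = 1)
    (hesc : ∀ a, ∃ u, a < u ∧ (p u - p a).natAbs = k) :
    ∀ t, (ac k p t).1 = p (inducedTimes p k ((ac k p t).2)) ∧
      inducedTimes p k ((ac k p t).2) ≤ t ∧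
      (∀ u, inducedTimes p k ((ac k p t).2) < u → u ≤ t → (p u - (ac k p t).1).natAbs < k) := by
  intro t
  induction t with
  | zero =>
    refine ⟨by simp [ac, inducedTimes], by simp [ac, inducedTimes], ?_⟩
    intro u h1 h2
    simp only [ac, inducedTimes] at h1 h2
    omega
  | succ t ih =>
    obtain ⟨ihA, ihle, ihinv⟩ := ih
    by_cases h : k ≤ (p (t+1) - (ac k p t).1).natAbs
    · -- renewal
      have hd : (p t - (ac k p t).1).natAbs < k := ac_dist hk p t
      have hs : (p (t+1) - p t).natAbs = 1 := hstep t
      have heq : (p (t+1) - (ac k p t).1).natAbs = k := by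
        have : (p (t+1) - (ac k p t).1) = (p t - (ac k p t).1) + (p (t+1) - p t) := by ring
        have hle : (p (t+1) - (ac k p t).1).natAbs ≤
            (p t - (ac k p t).1).natAbs + (p (t+1) - p t).natAbs := by
          rw [this]; exact Int.natAbs_add_le _ _
        omega
      set J := (ac k p t).2 with hJ
      have hmem : (t+1) ∈ {u : ℕ | inducedTimes p k J < u ∧ (p u - p (inducedTimes p k J)).natAbs = k} := by
        constructor
        · omega
        · rw [← ihA]; exact heq
      have hitJ1 : inducedTimes p k (J + 1) = t + 1 := by
        apply le_antisymm (Nat.sInf_le hmem)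
        have hne : {u : ℕ | inducedTimes p k J < u ∧ (p u - p (inducedTimes p k J)).natAbs = k}.Nonempty :=
          ⟨t+1, hmem⟩
        obtain ⟨hm1, hm2⟩ := Nat.sInf_mem hne
        set m := sInf {u : ℕ | inducedTimes p k J < u ∧ (p u - p (inducedTimes p k J)).natAbs = k} with hmdef
        rw [← ihA] at hm2
        by_contra hc
        push_neg at hc
        have hmt : m ≤ t := by omega
        have := ihinv m hm1 hmt
        omega
      have hac : ac k p (t+1) = (p (t+1), J + 1) := by
        simp only [ac, if_pos h]; rfl
      rw [hac]
      refine ⟨by rw [hitJ1], by rw [hitJ1], ?_⟩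
      intro u h1 h2
      rw [hitJ1] at h1
      omega
    · have hac : ac k p (t+1) = ac k p t := by simp only [ac, if_neg h]
      rw [hac]
      refine ⟨ihA, Nat.le_succ_of_le ihle, ?_⟩
      intro u h1 h2
      rcases Nat.lt_succ_iff_lt_or_eq.mp (Nat.lt_succ_of_le h2) with h' | h'
      · exact ihinv u h1 (by omega)
      · subst h'; omega

lemma it_gt (hk : 0 < k) (hstep : ∀ t, (p (t+1) - p t).natAbs = 1)
    (hesc : ∀ a, ∃ u, a < u ∧ (p u - p a).natAbs = k) (t : ℕ) :
    t < inducedTimes p k ((ac k p t).2 + 1) := by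
  obtain ⟨ihA, ihle, ihinv⟩ := ac_spec hk hstep hesc t
  obtain ⟨h1, h2⟩ := it_succ hesc ((ac k p t).2)
  rw [← ihA] at h2
  by_contra hc
  push_neg at hc
  have := ihinv (inducedTimes p k ((ac k p t).2 + 1)) h1 hc
  omega

lemma numInduced_eq_cnt (hk : 0 < k) (hstep : ∀ t, (p (t+1) - p t).natAbs = 1)
    (hesc : ∀ a, ∃ u, a < u ∧ (p u - p a).natAbs = k) (n : ℕ) :
    numInduced p k n = (ac k p n).2 := by
  obtain ⟨ihA, ihle, ihinv⟩ := ac_spec hk hstep hesc n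
  set J := (ac k p n).2 with hJ
  have hfil : ((Finset.range (n + 1)).filter (fun j =>
      0 < j ∧ inducedTimes p k (j - 1) < inducedTimes p k j ∧ inducedTimes p k j ≤ n))
      = Finset.Icc 1 J := by
    ext j
    simp only [Finset.mem_filter, Finset.mem_range, Finset.mem_Icc]
    constructor
    · rintro ⟨hjr, hj0, _, hjn⟩
      refine ⟨hj0, ?_⟩
      by_contra hc
      push_neg at hc
      have hmm : inducedTimes p k (J+1) ≤ inducedTimes p k j := (it_mono hesc).le_iff_le.mpr hc
      have hgt : n < inducedTimes p k (J + 1) := it_gt hk hstep hesc n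
      omega
    · rintro ⟨hj1, hjJ⟩
      have hjn : inducedTimes p k j ≤ n := le_trans ((it_mono hesc).le_iff_le.mpr hjJ) ihle
      have hlt : inducedTimes p k (j-1) < inducedTimes p k j := by
        have h' : inducedTimes p k (j-1) < inducedTimes p k ((j-1)+1) := (it_succ hesc (j-1)).1
        have he : j - 1 + 1 = j := by omega
        rwa [he] at h'
      have hJn : J ≤ n := ac_snd_le k p n
      exact ⟨by omega, by omega, hlt, hjn⟩
  rw [numInduced, hfil, Nat.card_Icc]
  omega



lemma exp_le_quad {x : ℝ} (h0 : 0 ≤ x) (h1 : x ≤ 1) : Real.exp x ≤ 1 + x + x ^ 2 := by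
  have hb := Real.exp_bound (x := x) (by rw [abs_of_nonneg h0]; exact h1) (n := 2) (by norm_num)
  have h2 : |x| = x := abs_of_nonneg h0
  rw [h2] at hb
  have hsum : ∑ m ∈ Finset.range 2, x ^ m / m.factorial = 1 + x := by
    simp [Finset.sum_range_succ]
  rw [hsum] at hb
  norm_num [Nat.factorial] at hb
  have := (abs_sub_le_iff.1 hb).1
  nlinarith [sq_nonneg x]

lemma exp_neg_le_quad {x : ℝ} (h0 : 0 ≤ x) (h1 : x ≤ 1) : Real.exp (-x) ≤ 1 - x + x ^ 2 := by
  have hb := Real.exp_bound (x := -x) (by rw [abs_neg, abs_of_nonneg h0]; exact h1)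
    (n := 2) (by norm_num)
  have h2 : |(-x)| = x := by rw [abs_neg, abs_of_nonneg h0]
  rw [h2] at hb
  have hsum : ∑ m ∈ Finset.range 2, (-x) ^ m / m.factorial = 1 - x := by
    simp [Finset.sum_range_succ]
    ring
  rw [hsum] at hb
  norm_num [Nat.factorial] at hb
  have := (abs_sub_le_iff.1 hb).1
  nlinarith [sq_nonneg x]

lemma cosh_le_exp_sq {x : ℝ} (h0 : 0 ≤ x) (h2 : x ≤ 2) : Real.cosh x ≤ Real.exp (x ^ 2) := by
  rcases le_or_gt x 1 with h1 | h1
  · have he := exp_le_quad h0 h1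
    have hne := exp_neg_le_quad h0 h1
    rw [Real.cosh_eq]
    have : 1 + x ^ 2 ≤ Real.exp (x ^ 2) := by
      have := Real.add_one_le_exp (x ^ 2)
      linarith
    linarith
  · have hc : Real.cosh x < Real.exp x := by
      rw [Real.cosh_eq]
      have : Real.exp (-x) < Real.exp x := Real.exp_lt_exp.mpr (by linarith)
      linarith
    have : Real.exp x ≤ Real.exp (x ^ 2) := Real.exp_le_exp.mpr (by nlinarith)
    linarith

lemma log_cosh_two : (5:ℝ)/4 ≤ Real.log (Real.cosh 2) := by
  have hpos : (0:ℝ) < Real.cosh 2 := Real.cosh_pos 2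
  rw [Real.le_log_iff_exp_le hpos]
  have h1 : Real.exp (5/4) * Real.exp (3/4) = Real.exp 2 := by
    rw [← Real.exp_add]; norm_num
  have he13 : Real.exp (1 : ℝ) ^ (3:ℕ) = Real.exp 3 := by
    rw [← Real.exp_nat_mul]; norm_num
  have he34 : Real.exp (3/4 : ℝ) ^ (4:ℕ) = Real.exp 3 := by
    rw [← Real.exp_nat_mul]; norm_num
  have he3 : (16:ℝ) ≤ Real.exp 3 := by
    have hgt : (2.7182818283:ℝ) < Real.exp 1 := Real.exp_one_gt_d9
    have hcube : (2.7182818283:ℝ)^(3:ℕ) ≤ Real.exp 1 ^ (3:ℕ) :=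
      pow_le_pow_left₀ (by norm_num) hgt.le 3
    rw [he13] at hcube
    nlinarith
  have h2 : (2:ℝ) ≤ Real.exp (3/4) := by
    by_contra hc
    push_neg at hc
    have : Real.exp (3/4 : ℝ) ^ (4:ℕ) < 2^(4:ℕ) :=
      pow_lt_pow_left₀ hc (Real.exp_pos _).le (by norm_num)
    rw [he34] at this
    norm_num at this
    linarith
  have h3 : Real.exp 2 / 2 ≤ Real.cosh 2 := by
    rw [Real.cosh_eq]
    have := Real.exp_pos (-2 : ℝ)
    linarith
  have h4 : Real.exp (5/4) ≤ Real.exp 2 / 2 := by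
    nlinarith [Real.exp_pos (5/4 : ℝ)]
  linarith

lemma cos_inv_lt_one {k : ℕ} (hk : 1 ≤ k) : Real.cos ((k:ℝ)⁻¹) < 1 := by
  have hk0 : (0:ℝ) < (k:ℝ)⁻¹ := by
    have : (0:ℝ) < (k:ℝ) := by exact_mod_cast hk
    positivity
  have hk1 : ((k:ℝ))⁻¹ ≤ 1 := by
    rw [inv_le_one_iff₀]
    right; exact_mod_cast hk
  have hsin : 0 < Real.sin ((k:ℝ)⁻¹ / 2) := by
    apply Real.sin_pos_of_pos_of_lt_pi
    · positivity
    · nlinarith [Real.pi_gt_three]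
  have hcos2 : Real.cos ((k:ℝ)⁻¹) = 1 - 2 * Real.sin ((k:ℝ)⁻¹/2) ^ 2 := by
    have h1 := Real.cos_two_mul ((k:ℝ)⁻¹/2)
    have h2 := Real.sin_sq_add_cos_sq ((k:ℝ)⁻¹/2)
    have h3 : 2 * ((k:ℝ)⁻¹/2) = (k:ℝ)⁻¹ := by ring
    rw [h3] at h1
    nlinarith [h1, h2]
  nlinarith



variable {Ω : Type*} [MeasurableSpace Ω] {μ : Measure Ω} [IsProbabilityMeasure μ]
variable {S : ℕ → Ω → ℤ}

lemma meas_xi (hmeas : ∀ n, Measurable (S n)) (s : ℕ) :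
    Measurable (fun ω => S (s+1) ω - S s ω) :=
  (hmeas (s+1)).sub (hmeas s)

lemma xi_pm_ae (hmeas : ∀ n, Measurable (S n))
    (hlaw : ∀ n, μ {ω | S (n + 1) ω - S n ω = 1} = 1 / 2 ∧
      μ {ω | S (n + 1) ω - S n ω = -1} = 1 / 2) (s : ℕ) :
    μ {ω | S (s+1) ω - S s ω = 1 ∨ S (s+1) ω - S s ω = -1}ᶜ = 0 := by
  have h := hlaw s
  have mA : MeasurableSet {ω | S (s+1) ω - S s ω = 1} :=
    (meas_xi hmeas s) (measurableSet_singleton 1)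
  have mB : MeasurableSet {ω | S (s+1) ω - S s ω = -1} :=
    (meas_xi hmeas s) (measurableSet_singleton (-1))
  have hdisj : Disjoint {ω | S (s+1) ω - S s ω = 1} {ω | S (s+1) ω - S s ω = -1} := by
    rw [Set.disjoint_left]
    intro ω h1 h2
    simp only [Set.mem_setOf_eq] at h1 h2
    omega
  have hU : {ω | S (s+1) ω - S s ω = 1 ∨ S (s+1) ω - S s ω = -1} =
      {ω | S (s+1) ω - S s ω = 1} ∪ {ω | S (s+1) ω - S s ω = -1} := rfl
  rw [hU, measure_compl (mA.union mB) (measure_ne_top _ _), measure_union hdisj mB, h.1, h.2]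
  rw [measure_univ]
  simp [ENNReal.inv_two_add_inv_two]

lemma integral_xi (hmeas : ∀ n, Measurable (S n))
    (hlaw : ∀ n, μ {ω | S (n + 1) ω - S n ω = 1} = 1 / 2 ∧
      μ {ω | S (n + 1) ω - S n ω = -1} = 1 / 2) (s : ℕ) :
    ∫ ω, ((S (s+1) ω - S s ω : ℤ) : ℝ) ∂μ = 0 := by
  set A := {ω | S (s+1) ω - S s ω = 1} with hA
  set B := {ω | S (s+1) ω - S s ω = -1} with hB
  have mA : MeasurableSet A := (meas_xi hmeas s) (measurableSet_singleton 1)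
  have mB : MeasurableSet B := (meas_xi hmeas s) (measurableSet_singleton (-1))
  have hae : (fun ω => ((S (s+1) ω - S s ω : ℤ) : ℝ)) =ᵐ[μ]
      (fun ω => A.indicator (fun _ => (1:ℝ)) ω + B.indicator (fun _ => (-1:ℝ)) ω) := by
    have hcompl := xi_pm_ae hmeas hlaw s
    rw [Filter.EventuallyEq, ae_iff]
    refine measure_mono_null ?_ hcompl
    intro ω hω
    simp only [Set.mem_setOf_eq, Set.mem_compl_iff] at hω ⊢
    intro hor
    apply hω
    rcases hor with h1 | h1
    · have hωA : ω ∈ A := h1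
      have hωB : ω ∉ B := by simp only [hB, Set.mem_setOf_eq]; omega
      simp [Set.indicator_of_mem hωA, Set.indicator_of_notMem hωB, h1]
    · have hωA : ω ∉ A := by simp only [hA, Set.mem_setOf_eq]; omega
      have hωB : ω ∈ B := h1
      simp [Set.indicator_of_mem hωB, Set.indicator_of_notMem hωA, h1]
  rw [integral_congr_ae hae]
  rw [integral_add ((integrable_const (1:ℝ)).indicator mA) ((integrable_const (-1:ℝ)).indicator mB)]
  rw [integral_indicator_const (1:ℝ) mA, integral_indicator_const (-1:ℝ) mB]
  rw [measureReal_def, measureReal_def, (hlaw s).1, (hlaw s).2]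
  norm_num

lemma S_eq_sum (h0 : ∀ ω, S 0 ω = 0) (ω : Ω) (u : ℕ) :
    S u ω = ∑ j ∈ Finset.range u, (S (j+1) ω - S j ω) := by
  induction u with
  | zero => simp [h0 ω]
  | succ u ih => rw [Finset.sum_range_succ, ← ih]; ring

lemma integral_mul_xi (hmeas : ∀ n, Measurable (S n)) (h0 : ∀ ω, S 0 ω = 0)
    (hind : iIndepFun (fun n ω => S (n + 1) ω - S n ω) μ)
    (hlaw : ∀ n, μ {ω | S (n + 1) ω - S n ω = 1} = 1 / 2 ∧
      μ {ω | S (n + 1) ω - S n ω = -1} = 1 / 2)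
    (s : ℕ) (G : (ℕ → ℤ) → ℝ)
    (hGd : ∀ p q : ℕ → ℤ, (∀ u, u ≤ s → p u = q u) → G p = G q)
    (C : ℝ) (hGb : ∀ p, |G p| ≤ C) :
    ∫ ω, G (fun u => S u ω) * ((S (s+1) ω - S s ω : ℤ) : ℝ) ∂μ = 0 := by
  classical
  set γ : ((↥(Finset.range s) → ℤ)) → ℝ := fun v =>
    G (fun u => ∑ j ∈ Finset.range (min u s),
      if h : j < s then v ⟨j, Finset.mem_range.mpr h⟩ else 0) with hγ
  set V : Ω → (↥(Finset.range s) → ℤ) := fun ω j => S ((j:ℕ)+1) ω - S (j:ℕ) ω with hV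
  have hXeq : ∀ ω, G (fun u => S u ω) = γ (V ω) := by
    intro ω
    apply hGd
    intro u hu
    rw [S_eq_sum h0 ω u]
    rw [min_eq_left hu]
    apply Finset.sum_congr rfl
    intro j hj
    have hjs : j < s := lt_of_lt_of_le (Finset.mem_range.mp hj) hu
    simp [hjs, hV]
  have hindF : IndepFun (fun ω (i : ↥(Finset.range s)) => S ((i:ℕ)+1) ω - S (i:ℕ) ω)
      (fun ω (i : ↥({s} : Finset ℕ)) => S ((i:ℕ)+1) ω - S (i:ℕ) ω) μ := by
    have hd : Disjoint (Finset.range s) ({s} : Finset ℕ) := by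
      simp only [Finset.disjoint_left, Finset.mem_range, Finset.mem_singleton]
      omega
    exact hind.indepFun_finset (Finset.range s) {s} hd (fun i => meas_xi hmeas i)
  have hγmeas : Measurable γ := measurable_of_countable γ
  have hev : Measurable (fun x : (↥({s} : Finset ℕ) → ℤ) =>
      ((x ⟨s, Finset.mem_singleton_self s⟩ : ℤ) : ℝ)) := measurable_of_countable _
  have hindXY : IndepFun (fun ω => γ (V ω)) (fun ω => ((S (s+1) ω - S s ω : ℤ) : ℝ)) μ := by
    have h2 := hindF.comp hγmeas hev
    exact h2
  have hVmeas : Measurable V := by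
    apply measurable_pi_lambda
    intro i
    exact meas_xi hmeas (i : ℕ)
  have hXmeas : Measurable (fun ω => γ (V ω)) := hγmeas.comp hVmeas
  have hXint : Integrable (fun ω => γ (V ω)) μ := by
    apply (integrable_const C).mono' hXmeas.aestronglyMeasurable
    apply ae_of_all
    intro ω
    rw [← hXeq ω]
    calc ‖G (fun u => S u ω)‖ = |G (fun u => S u ω)| := rfl
      _ ≤ C := hGb _
  have hYint : Integrable (fun ω => ((S (s+1) ω - S s ω : ℤ) : ℝ)) μ := by
    have hm : Measurable (fun ω => ((S (s+1) ω - S s ω : ℤ) : ℝ)) :=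
      (measurable_of_countable (Int.cast : ℤ → ℝ)).comp (meas_xi hmeas s)
    apply (integrable_const (1:ℝ)).mono' hm.aestronglyMeasurable
    have hcompl := xi_pm_ae hmeas hlaw s
    rw [ae_iff]
    refine measure_mono_null ?_ hcompl
    intro ω hω
    simp only [Set.mem_setOf_eq, Set.mem_compl_iff] at hω ⊢
    intro hor
    apply hω
    rcases hor with h1 | h1 <;> simp [h1]
  have hmul := hindXY.integral_mul_eq_mul_integral hXint.aestronglyMeasurable hYint.aestronglyMeasurable
  calc ∫ ω, G (fun u => S u ω) * ((S (s+1) ω - S s ω : ℤ) : ℝ) ∂μ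
      = ∫ ω, γ (V ω) * ((S (s+1) ω - S s ω : ℤ) : ℝ) ∂μ := by
        apply integral_congr_ae
        apply ae_of_all
        intro ω
        dsimp only
        rw [hXeq ω]
    _ = (∫ ω, γ (V ω) ∂μ) * ∫ ω, ((S (s+1) ω - S s ω : ℤ) : ℝ) ∂μ := hmul
    _ = 0 := by rw [integral_xi hmeas hlaw s]; ring

/-- a path functional depending only on the path up to time `s` is measurable as a
function of `ω`. -/
lemma meas_pathfun (hmeas : ∀ n, Measurable (S n)) (s : ℕ) (F : (ℕ → ℤ) → ℝ)
    (hFd : ∀ p q : ℕ → ℤ, (∀ u, u ≤ s → p u = q u) → F p = F q) :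
    Measurable (fun ω => F (fun u => S u ω)) := by
  classical
  set trunc : (Fin (s+1) → ℤ) → (ℕ → ℤ) := fun v u => if h : u < s + 1 then v ⟨u, h⟩ else 0
    with htr
  have heq : (fun ω => F (fun u => S u ω)) =
      (fun ω => (F ∘ trunc) (fun i : Fin (s+1) => S (i : ℕ) ω)) := by
    funext ω
    simp only [Function.comp]
    apply hFd
    intro u hu
    have hu' : u < s + 1 := by omega
    simp [htr, hu']
    exact fun h => absurd h (by omega)
  rw [heq]
  exact (measurable_of_countable (F ∘ trunc)).comp
    (measurable_pi_lambda _ (fun i => hmeas (i : ℕ)))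

lemma integrable_pathfun (hmeas : ∀ n, Measurable (S n)) (s : ℕ) (F : (ℕ → ℤ) → ℝ)
    (hFd : ∀ p q : ℕ → ℤ, (∀ u, u ≤ s → p u = q u) → F p = F q)
    (C : ℝ) (hFb : ∀ p, |F p| ≤ C) :
    Integrable (fun ω => F (fun u => S u ω)) μ := by
  apply (integrable_const C).mono' (meas_pathfun hmeas s F hFd).aestronglyMeasurable
  exact ae_of_all _ (fun ω => hFb _)

/-- The key supermartingale-type estimate. -/
lemma integral_F_le (hmeas : ∀ n, Measurable (S n)) (h0 : ∀ ω, S 0 ω = 0)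
    (hind : iIndepFun (fun n ω => S (n + 1) ω - S n ω) μ)
    (hlaw : ∀ n, μ {ω | S (n + 1) ω - S n ω = 1} = 1 / 2 ∧
      μ {ω | S (n + 1) ω - S n ω = -1} = 1 / 2)
    (ρ : ℕ → ℝ) (hρ : ∀ s, 0 ≤ ρ s) (F G : ℕ → (ℕ → ℤ) → ℝ) (C D : ℕ → ℝ)
    (hFd : ∀ s, ∀ p q : ℕ → ℤ, (∀ u, u ≤ s → p u = q u) → F s p = F s q)
    (hGd : ∀ s, ∀ p q : ℕ → ℤ, (∀ u, u ≤ s → p u = q u) → G s p = G s q)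
    (hFb : ∀ s p, |F s p| ≤ C s) (hGb : ∀ s p, |G s p| ≤ D s)
    (hF0 : ∀ p, F 0 p = 1)
    (hstep : ∀ (s : ℕ) (p : ℕ → ℤ), (p (s+1) - p s = 1 ∨ p (s+1) - p s = -1) →
      F (s+1) p ≤ ρ s * F s p + G s p * ((p (s+1) - p s : ℤ) : ℝ)) :
    ∀ t, ∫ ω, F t (fun u => S u ω) ∂μ ≤ ∏ s ∈ Finset.range t, ρ s := by
  intro t
  induction t with
  | zero =>
    simp only [Finset.prod_range_zero]
    have : (fun ω => F 0 (fun u => S u ω)) = (fun _ => (1:ℝ)) := by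
      funext ω; exact hF0 _
    rw [this, integral_const]
    simp
  | succ s ih =>
    have hintF : Integrable (fun ω => F s (fun u => S u ω)) μ :=
      integrable_pathfun hmeas s (F s) (hFd s) (C s) (hFb s)
    have hintF1 : Integrable (fun ω => F (s+1) (fun u => S u ω)) μ :=
      integrable_pathfun hmeas (s+1) (F (s+1)) (hFd (s+1)) (C (s+1)) (hFb (s+1))
    have hmeasG : Measurable (fun ω => G s (fun u => S u ω)) :=
      meas_pathfun hmeas s (G s) (hGd s)
    have hmeasXi : Measurable (fun ω => ((S (s+1) ω - S s ω : ℤ) : ℝ)) :=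
      (measurable_of_countable (Int.cast : ℤ → ℝ)).comp ((hmeas (s+1)).sub (hmeas s))
    have hintGxi : Integrable (fun ω => G s (fun u => S u ω) * ((S (s+1) ω - S s ω : ℤ) : ℝ)) μ := by
      apply (integrable_const (D s * 1)).mono' (hmeasG.mul hmeasXi).aestronglyMeasurable
      have hcompl := xi_pm_ae hmeas hlaw s
      rw [ae_iff]
      refine measure_mono_null ?_ hcompl
      intro ω hω
      simp only [Set.mem_setOf_eq, Set.mem_compl_iff] at hω ⊢
      intro hor
      apply hω
      have hD : (0:ℝ) ≤ D s := le_trans (abs_nonneg _) (hGb s (fun _ => 0))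
      rcases hor with h1 | h1 <;>
        · simp only [Pi.mul_apply]; rw [Real.norm_eq_abs, abs_mul, h1]
          simp only [Int.cast_one, Int.cast_neg, abs_one, abs_neg]
          calc |G s (fun u => S u ω)| * 1 ≤ D s * 1 := by
                have := hGb s (fun u => S u ω); nlinarith
            _ ≤ D s * 1 := le_refl _
    have hintRHS : Integrable (fun ω => ρ s * F s (fun u => S u ω) +
        G s (fun u => S u ω) * ((S (s+1) ω - S s ω : ℤ) : ℝ)) μ :=
      (hintF.const_mul (ρ s)).add hintGxi
    have hae : (fun ω => F (s+1) (fun u => S u ω)) ≤ᵐ[μ]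
        (fun ω => ρ s * F s (fun u => S u ω) +
          G s (fun u => S u ω) * ((S (s+1) ω - S s ω : ℤ) : ℝ)) := by
      have hcompl := xi_pm_ae hmeas hlaw s
      rw [Filter.EventuallyLE, ae_iff]
      refine measure_mono_null ?_ hcompl
      intro ω hω
      simp only [Set.mem_setOf_eq, Set.mem_compl_iff] at hω ⊢
      intro hor
      apply hω
      exact hstep s (fun u => S u ω) hor
    calc ∫ ω, F (s+1) (fun u => S u ω) ∂μ
        ≤ ∫ ω, (ρ s * F s (fun u => S u ω) +
            G s (fun u => S u ω) * ((S (s+1) ω - S s ω : ℤ) : ℝ)) ∂μ :=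
          integral_mono_ae hintF1 hintRHS hae
      _ = ρ s * ∫ ω, F s (fun u => S u ω) ∂μ +
            ∫ ω, G s (fun u => S u ω) * ((S (s+1) ω - S s ω : ℤ) : ℝ) ∂μ := by
          rw [integral_add (hintF.const_mul (ρ s)) hintGxi, integral_const_mul]
      _ = ρ s * ∫ ω, F s (fun u => S u ω) ∂μ := by
          rw [integral_mul_xi hmeas h0 hind hlaw s (G s) (hGd s) (D s) (hGb s)]; ring
      _ ≤ ρ s * ∏ u ∈ Finset.range s, ρ u := by
          apply mul_le_mul_of_nonneg_left ih (hρ s)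
      _ = ∏ u ∈ Finset.range (s+1), ρ u := by rw [Finset.prod_range_succ]; ring



noncomputable def Fy (k : ℕ) (lam : ℝ) (s : ℕ) (p : ℕ → ℤ) : ℝ :=
  Real.cosh (lam * k) ^ (ac k p s).2 * Real.cosh (lam * ((p s - (ac k p s).1 : ℤ) : ℝ))

noncomputable def Gy (k : ℕ) (lam : ℝ) (s : ℕ) (p : ℕ → ℤ) : ℝ :=
  Real.cosh (lam * k) ^ (ac k p s).2 *
    Real.sinh (lam * ((p s - (ac k p s).1 : ℤ) : ℝ)) * Real.sinh lam

lemma Fy_dep (k : ℕ) (lam : ℝ) (s : ℕ) (p q : ℕ → ℤ) (h : ∀ u, u ≤ s → p u = q u) :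
    Fy k lam s p = Fy k lam s q := by
  unfold Fy
  rw [ac_congr s h, h s le_rfl]

lemma Gy_dep (k : ℕ) (lam : ℝ) (s : ℕ) (p q : ℕ → ℤ) (h : ∀ u, u ≤ s → p u = q u) :
    Gy k lam s p = Gy k lam s q := by
  unfold Gy
  rw [ac_congr s h, h s le_rfl]

lemma dist_le (k : ℕ) (hk : 0 < k) (lam : ℝ) (hlam : 0 ≤ lam) (s : ℕ) (p : ℕ → ℤ) :
    |lam * ((p s - (ac k p s).1 : ℤ) : ℝ)| ≤ |lam * k| := by
  have h1 : (p s - (ac k p s).1).natAbs < k := ac_dist hk p s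
  have h2 : |((p s - (ac k p s).1 : ℤ) : ℝ)| ≤ (k:ℝ) := by
    rw [← Int.cast_abs]
    have : |p s - (ac k p s).1| ≤ (k:ℤ) := by
      rw [Int.abs_eq_natAbs]
      exact_mod_cast h1.le
    exact_mod_cast this
  rw [abs_mul, abs_mul, abs_of_nonneg hlam]
  apply mul_le_mul_of_nonneg_left _ hlam
  rw [abs_of_nonneg (by positivity : (0:ℝ) ≤ (k:ℝ))]
  exact h2

lemma Fy_nonneg (k : ℕ) (lam : ℝ) (s : ℕ) (p : ℕ → ℤ) : 0 ≤ Fy k lam s p := by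
  unfold Fy
  positivity

lemma Fy_ge (k : ℕ) (lam : ℝ) (s : ℕ) (p : ℕ → ℤ) :
    Real.cosh (lam * k) ^ (ac k p s).2 ≤ Fy k lam s p := by
  unfold Fy
  nth_rewrite 1 [← mul_one (Real.cosh (lam * k) ^ (ac k p s).2)]
  apply mul_le_mul_of_nonneg_left (Real.one_le_cosh _) (by positivity)

lemma Fy_bound (k : ℕ) (hk : 0 < k) (lam : ℝ) (hlam : 0 ≤ lam) (s : ℕ) (p : ℕ → ℤ) :
    |Fy k lam s p| ≤ Real.cosh (lam * k) ^ (s+1) := by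
  unfold Fy
  rw [abs_mul, abs_of_nonneg (by positivity : (0:ℝ) ≤ Real.cosh (lam * k) ^ (ac k p s).2),
    abs_of_nonneg (Real.cosh_pos _).le]
  have h1 : Real.cosh (lam * k) ^ (ac k p s).2 ≤ Real.cosh (lam * k) ^ s :=
    pow_le_pow_right₀ (Real.one_le_cosh _) (ac_snd_le k p s)
  have h2 : Real.cosh (lam * ((p s - (ac k p s).1 : ℤ) : ℝ)) ≤ Real.cosh (lam * k) := by
    rw [← Real.cosh_abs, ← Real.cosh_abs (lam * k)]
    exact Real.cosh_le_cosh.mpr (by rw [abs_abs, abs_abs]; exact dist_le k hk lam hlam s p)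
  calc Real.cosh (lam * k) ^ (ac k p s).2 * Real.cosh (lam * ((p s - (ac k p s).1 : ℤ) : ℝ))
      ≤ Real.cosh (lam * k) ^ s * Real.cosh (lam * k) := by
        apply mul_le_mul h1 h2 (Real.cosh_pos _).le (by positivity)
    _ = Real.cosh (lam * k) ^ (s+1) := by rw [pow_succ]

lemma Gy_bound (k : ℕ) (hk : 0 < k) (lam : ℝ) (hlam : 0 ≤ lam) (s : ℕ) (p : ℕ → ℤ) :
    |Gy k lam s p| ≤ Real.cosh (lam * k) ^ s * Real.sinh (lam * k) * Real.sinh lam := by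
  unfold Gy
  rw [abs_mul, abs_mul]
  have h1 : |Real.cosh (lam * k) ^ (ac k p s).2| ≤ Real.cosh (lam * k) ^ s := by
    rw [abs_of_nonneg (by positivity)]
    exact pow_le_pow_right₀ (Real.one_le_cosh _) (ac_snd_le k p s)
  have h2 : |Real.sinh (lam * ((p s - (ac k p s).1 : ℤ) : ℝ))| ≤ Real.sinh (lam * k) := by
    rw [Real.abs_sinh]
    calc Real.sinh |lam * ((p s - (ac k p s).1 : ℤ) : ℝ)| ≤ Real.sinh |lam * k| :=
          Real.sinh_le_sinh.mpr (dist_le k hk lam hlam s p)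
      _ = Real.sinh (lam * k) := by
          rw [abs_of_nonneg (by positivity : (0:ℝ) ≤ lam * k)]
  have h3 : |Real.sinh lam| = Real.sinh lam := by
    rw [Real.abs_sinh, abs_of_nonneg hlam]
  rw [h3]
  have hs : 0 ≤ Real.sinh lam := by
    rw [← Real.sinh_zero]
    exact Real.sinh_le_sinh.mpr hlam
  apply mul_le_mul_of_nonneg_right _ hs
  apply mul_le_mul h1 h2 (abs_nonneg _) (by positivity)

lemma Fy_zero (k : ℕ) (lam : ℝ) (p : ℕ → ℤ) : Fy k lam 0 p = 1 := by
  unfold Fy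
  simp [ac]

lemma Fy_step (k : ℕ) (hk : 0 < k) (lam : ℝ) (s : ℕ) (p : ℕ → ℤ)
    (he : p (s+1) - p s = 1 ∨ p (s+1) - p s = -1) :
    Fy k lam (s+1) p = Real.cosh lam * Fy k lam s p +
      Gy k lam s p * ((p (s+1) - p s : ℤ) : ℝ) := by
  have hDk : (p s - (ac k p s).1).natAbs < k := ac_dist hk p s
  have hsplit : (p (s+1) - (ac k p s).1) = (p s - (ac k p s).1) + (p (s+1) - p s) := by ring
  have key : Real.cosh (lam * ((p (s+1) - (ac k p s).1 : ℤ) : ℝ)) =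
      Real.cosh lam * Real.cosh (lam * ((p s - (ac k p s).1 : ℤ) : ℝ)) +
        Real.sinh (lam * ((p s - (ac k p s).1 : ℤ) : ℝ)) * Real.sinh lam *
          ((p (s+1) - p s : ℤ) : ℝ) := by
    rcases he with h | h
    · have hc : ((p (s+1) - (ac k p s).1 : ℤ) : ℝ) =
          ((p s - (ac k p s).1 : ℤ) : ℝ) + 1 := by
        rw [hsplit, h]; push_cast; ring
      rw [hc, h, mul_add, mul_one, Real.cosh_add]
      push_cast
      ring
    · have hc : ((p (s+1) - (ac k p s).1 : ℤ) : ℝ) =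
          ((p s - (ac k p s).1 : ℤ) : ℝ) - 1 := by
        rw [hsplit, h]; push_cast; ring
      rw [hc, h, mul_sub, mul_one, Real.cosh_sub]
      push_cast
      ring
  by_cases hbr : k ≤ (p (s+1) - (ac k p s).1).natAbs
  · have he1 : (p (s+1) - p s).natAbs = 1 := by rcases he with h | h <;> rw [h] <;> rfl
    have hle : (p (s+1) - (ac k p s).1).natAbs ≤ (p s - (ac k p s).1).natAbs +
        (p (s+1) - p s).natAbs := by
      rw [hsplit]; exact Int.natAbs_add_le _ _
    have heq : (p (s+1) - (ac k p s).1).natAbs = k := by omega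
    have hcast : ((p (s+1) - (ac k p s).1 : ℤ) : ℝ) = (k:ℝ) ∨
        ((p (s+1) - (ac k p s).1 : ℤ) : ℝ) = -(k:ℝ) := by
      rcases Int.natAbs_eq_iff.mp heq with h | h
      · left; rw [h]; push_cast; ring
      · right; rw [h]; push_cast; ring
    have hch : Real.cosh (lam * ((p (s+1) - (ac k p s).1 : ℤ) : ℝ)) = Real.cosh (lam * k) := by
      rcases hcast with h | h
      · rw [h]
      · rw [h]
        rw [show lam * -(k:ℝ) = -(lam * k) by ring, Real.cosh_neg]
    have hac : ac k p (s+1) = (p (s+1), (ac k p s).2 + 1) := by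
      show (if k ≤ (p (s+1) - (ac k p s).1).natAbs
           then (p (s+1), (ac k p s).2 + 1) else ac k p s) = _
      rw [if_pos hbr]
    unfold Fy Gy
    rw [hac]
    simp only [sub_self, Int.cast_zero, mul_zero, Real.cosh_zero, mul_one]
    have hpow : Real.cosh (lam * k) ^ ((ac k p s).2 + 1) =
        Real.cosh (lam * k) ^ (ac k p s).2 *
          Real.cosh (lam * ((p (s+1) - (ac k p s).1 : ℤ) : ℝ)) := by
      rw [pow_succ, hch]
    rw [hpow, key]
    ring
  · have hac : ac k p (s+1) = ac k p s := by
      show (if k ≤ (p (s+1) - (ac k p s).1).natAbs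
           then (p (s+1), (ac k p s).2 + 1) else ac k p s) = _
      rw [if_neg hbr]
    unfold Fy Gy
    rw [hac, key]
    ring



def stayP (a k s : ℕ) (p : ℕ → ℤ) : Prop := ∀ u, a < u → u ≤ s → (p u - p a).natAbs < k

noncomputable def Fw (a k : ℕ) (θ : ℝ) (s : ℕ) (p : ℕ → ℤ) : ℝ :=
  if stayP a k s p then Real.cos (θ * ((p (max a s) - p a : ℤ) : ℝ)) else 0

noncomputable def Gw (a k : ℕ) (θ : ℝ) (s : ℕ) (p : ℕ → ℤ) : ℝ :=
  if stayP a k s p ∧ a ≤ s then -(Real.sin θ * Real.sin (θ * ((p s - p a : ℤ) : ℝ))) else 0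

lemma stayP_congr {a k s : ℕ} {p q : ℕ → ℤ} (ha : a ≤ s) (h : ∀ u, u ≤ s → p u = q u) :
    stayP a k s p ↔ stayP a k s q := by
  unfold stayP
  constructor <;> intro hs u h1 h2
  · rw [← h u h2, ← h a ha]; exact hs u h1 h2
  · rw [h u h2, h a ha]; exact hs u h1 h2

lemma stayP_vac {a k s : ℕ} (h : s ≤ a) (p : ℕ → ℤ) : stayP a k s p := by
  intro u h1 h2; omega

lemma Fw_dep (a k : ℕ) (θ : ℝ) (s : ℕ) (p q : ℕ → ℤ) (h : ∀ u, u ≤ s → p u = q u) :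
    Fw a k θ s p = Fw a k θ s q := by
  unfold Fw
  rcases le_or_gt a s with ha | ha
  · rw [max_eq_right ha]
    by_cases hst : stayP a k s p
    · rw [if_pos hst, if_pos ((stayP_congr ha h).mp hst), h s le_rfl, h a ha]
    · rw [if_neg hst, if_neg (fun hc => hst ((stayP_congr ha h).mpr hc))]
  · rw [max_eq_left ha.le]
    rw [if_pos (stayP_vac ha.le p), if_pos (stayP_vac ha.le q)]
    simp

lemma Gw_dep (a k : ℕ) (θ : ℝ) (s : ℕ) (p q : ℕ → ℤ) (h : ∀ u, u ≤ s → p u = q u) :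
    Gw a k θ s p = Gw a k θ s q := by
  unfold Gw
  rcases le_or_gt a s with ha | ha
  · by_cases hst : stayP a k s p
    · rw [if_pos ⟨hst, ha⟩, if_pos ⟨(stayP_congr ha h).mp hst, ha⟩, h s le_rfl, h a ha]
    · rw [if_neg (fun hc => hst hc.1), if_neg (fun hc => hst ((stayP_congr ha h).mpr hc.1))]
  · rw [if_neg (fun hc => by omega : ¬(stayP a k s p ∧ a ≤ s)),
      if_neg (fun hc => by omega : ¬(stayP a k s q ∧ a ≤ s))]

lemma Fw_bound (a k : ℕ) (θ : ℝ) (s : ℕ) (p : ℕ → ℤ) : |Fw a k θ s p| ≤ 1 := by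
  unfold Fw
  split
  · exact Real.abs_cos_le_one _
  · simp

lemma Gw_bound (a k : ℕ) (θ : ℝ) (s : ℕ) (p : ℕ → ℤ) : |Gw a k θ s p| ≤ 1 := by
  unfold Gw
  split
  · rw [abs_neg, abs_mul]
    calc |Real.sin θ| * |Real.sin (θ * ((p s - p a : ℤ) : ℝ))| ≤ 1 * 1 :=
        mul_le_mul (Real.abs_sin_le_one _) (Real.abs_sin_le_one _) (abs_nonneg _) zero_le_one
      _ = 1 := by ring
  · simp

lemma Fw_zero (a k : ℕ) (θ : ℝ) (p : ℕ → ℤ) : Fw a k θ 0 p = 1 := by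
  unfold Fw
  rw [if_pos (stayP_vac (Nat.zero_le a) p)]
  rw [max_eq_left (Nat.zero_le a)]
  simp

lemma theta_dist_le {k : ℕ} {θ : ℝ} (hθ0 : 0 ≤ θ) (hθk : θ * k ≤ 1)
    {x : ℤ} (hx : x.natAbs ≤ k) : |θ * (x : ℝ)| ≤ 1 := by
  rw [abs_mul, abs_of_nonneg hθ0]
  calc θ * |(x:ℝ)| ≤ θ * k := by
        apply mul_le_mul_of_nonneg_left _ hθ0
        rw [← Int.cast_abs]
        have : |x| ≤ (k:ℤ) := by rw [Int.abs_eq_natAbs]; exact_mod_cast hx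
        exact_mod_cast this
    _ ≤ 1 := hθk

lemma cos_nonneg_of_le_one {y : ℝ} (hy : |y| ≤ 1) : 0 ≤ Real.cos y := by
  apply Real.cos_nonneg_of_mem_Icc
  constructor
  · have := Real.pi_gt_three
    have h1 := abs_le.mp hy
    linarith [h1.1]
  · have := Real.pi_gt_three
    have h1 := abs_le.mp hy
    linarith [h1.2]

lemma stay_dist {a k s : ℕ} {p : ℕ → ℤ} (hk : 0 < k) (ha : a ≤ s) (hst : stayP a k s p) :
    (p s - p a).natAbs ≤ k - 1 := by
  rcases Nat.eq_or_lt_of_le ha with h | h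
  · subst h; simp
  · have := hst s h le_rfl; omega

lemma Fw_nonneg (a k : ℕ) (hk : 0 < k) (θ : ℝ) (hθ0 : 0 ≤ θ) (hθk : θ * k ≤ 1)
    (s : ℕ) (p : ℕ → ℤ) : 0 ≤ Fw a k θ s p := by
  unfold Fw
  split
  case isTrue hst =>
    rcases le_or_gt a s with ha | ha
    · rw [max_eq_right ha]
      apply cos_nonneg_of_le_one
      apply theta_dist_le hθ0 hθk
      have := stay_dist hk ha hst
      omega
    · rw [max_eq_left ha.le]
      simp
  case isFalse => exact le_refl 0

lemma Fw_step (a k : ℕ) (hk : 0 < k) (θ : ℝ) (hθ0 : 0 ≤ θ) (hθk : θ * k ≤ 1)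
    (s : ℕ) (p : ℕ → ℤ) (he : p (s+1) - p s = 1 ∨ p (s+1) - p s = -1) :
    Fw a k θ (s+1) p ≤ (if s < a then 1 else Real.cos θ) * Fw a k θ s p +
      Gw a k θ s p * ((p (s+1) - p s : ℤ) : ℝ) := by
  rcases lt_or_ge s a with hsa | has
  · -- early phase : both sides are 1
    rw [if_pos hsa]
    unfold Fw Gw
    rw [if_pos (stayP_vac (by omega : s+1 ≤ a) p), if_pos (stayP_vac (by omega : s ≤ a) p),
      if_neg (fun hc => by omega : ¬(stayP a k s p ∧ a ≤ s))]
    rw [max_eq_left (by omega : s+1 ≤ a), max_eq_left (by omega : s ≤ a)]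
    simp
  · rw [if_neg (by omega : ¬ s < a)]
    by_cases hst : stayP a k s p
    · -- current stay holds
      have hD : (p s - p a).natAbs ≤ k - 1 := stay_dist hk has hst
      have he1 : (p (s+1) - p s).natAbs = 1 := by rcases he with h | h <;> rw [h] <;> rfl
      have hsplit : p (s+1) - p a = (p s - p a) + (p (s+1) - p s) := by ring
      have hDe : (p (s+1) - p a).natAbs ≤ k := by
        have := Int.natAbs_add_le (p s - p a) (p (s+1) - p s)
        rw [← hsplit] at this
        omega
      have key : Real.cos (θ * ((p (s+1) - p a : ℤ) : ℝ)) =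
          Real.cos θ * Real.cos (θ * ((p s - p a : ℤ) : ℝ)) +
            (-(Real.sin θ * Real.sin (θ * ((p s - p a : ℤ) : ℝ)))) *
              ((p (s+1) - p s : ℤ) : ℝ) := by
        rcases he with h | h
        · have hc : ((p (s+1) - p a : ℤ) : ℝ) = ((p s - p a : ℤ) : ℝ) + 1 := by
            rw [hsplit, h]; push_cast; ring
          rw [hc, h, mul_add, mul_one, Real.cos_add]
          push_cast; ring
        · have hc : ((p (s+1) - p a : ℤ) : ℝ) = ((p s - p a : ℤ) : ℝ) - 1 := by
            rw [hsplit, h]; push_cast; ring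
          rw [hc, h, mul_sub, mul_one, Real.cos_sub]
          push_cast; ring
      have hFws : Fw a k θ s p = Real.cos (θ * ((p s - p a : ℤ) : ℝ)) := by
        unfold Fw
        rw [if_pos hst, max_eq_right has]
      have hGws : Gw a k θ s p = -(Real.sin θ * Real.sin (θ * ((p s - p a : ℤ) : ℝ))) := by
        unfold Gw
        rw [if_pos ⟨hst, has⟩]
      rw [hFws, hGws, ← key]
      by_cases hst1 : stayP a k (s+1) p
      · unfold Fw
        rw [if_pos hst1, max_eq_right (by omega : a ≤ s+1)]
      · unfold Fw
        rw [if_neg hst1]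
        exact cos_nonneg_of_le_one (theta_dist_le hθ0 hθk hDe)
    · -- stay already failed
      have hst1 : ¬ stayP a k (s+1) p := by
        intro hc
        exact hst (fun u h1 h2 => hc u h1 (by omega))
      unfold Fw Gw
      rw [if_neg hst, if_neg hst1, if_neg (fun hc => hst hc.1)]
      simp

/-- on paths with unit steps that never hit distance `k` from time `a`, all `Fw` are at
least `cos 1`. -/
lemma Fw_ge_cos_one (a k : ℕ) (hk : 0 < k) (θ : ℝ) (hθ0 : 0 ≤ θ) (hθk : θ * k ≤ 1)
    (p : ℕ → ℤ) (hpm : ∀ t, p (t+1) - p t = 1 ∨ p (t+1) - p t = -1)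
    (hne : ∀ u, a < u → (p u - p a).natAbs ≠ k) (s : ℕ) :
    Real.cos 1 ≤ Fw a k θ s p := by
  have hall : ∀ m : ℕ, (p (a + m) - p a).natAbs < k := by
    intro m
    induction m with
    | zero => simpa using hk
    | succ m ih =>
      have he1 : (p (a+m+1) - p (a+m)).natAbs = 1 := by
        rcases hpm (a+m) with h | h <;> rw [h] <;> rfl
      have hsplit : p (a+m+1) - p a = (p (a+m) - p a) + (p (a+m+1) - p (a+m)) := by ring
      have htri := Int.natAbs_add_le (p (a+m) - p a) (p (a+m+1) - p (a+m))
      rw [← hsplit] at htri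
      have hne' := hne (a+m+1) (by omega)
      have : a + (m+1) = a + m + 1 := by omega
      rw [this]
      omega
  have hstay : stayP a k s p := by
    intro u h1 h2
    have : u = a + (u - a) := by omega
    rw [this]
    exact hall (u - a)
  unfold Fw
  rw [if_pos hstay]
  rcases le_or_gt a s with ha | ha
  · rw [max_eq_right ha]
    have hd : (p s - p a).natAbs ≤ k := by
      have : s = a + (s - a) := by omega
      rw [this]
      exact (hall (s-a)).le
    have habs : |θ * ((p s - p a : ℤ) : ℝ)| ≤ 1 := theta_dist_le hθ0 hθk hd
    calc Real.cos 1 ≤ Real.cos |θ * ((p s - p a : ℤ) : ℝ)| := by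
          apply Real.cos_le_cos_of_nonneg_of_le_pi (abs_nonneg _) _ habs
          linarith [Real.pi_gt_three]
      _ = Real.cos (θ * ((p s - p a : ℤ) : ℝ)) := Real.cos_abs _
  · rw [max_eq_left ha.le]
    simp
    exact Real.cos_le_one 1


end SRWproof


namespace SRWproof

variable {Ω : Type*} [MeasurableSpace Ω] {μ : Measure Ω} [IsProbabilityMeasure μ]
variable {S : ℕ → Ω → ℤ}

lemma escape_null (hmeas : ∀ n, Measurable (S n)) (h0 : ∀ ω, S 0 ω = 0)
    (hind : iIndepFun (fun n ω => S (n + 1) ω - S n ω) μ)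
    (hlaw : ∀ n, μ {ω | S (n + 1) ω - S n ω = 1} = 1 / 2 ∧
      μ {ω | S (n + 1) ω - S n ω = -1} = 1 / 2)
    {k : ℕ} (hk1 : 1 ≤ k) (a : ℕ) :
    μ {ω | (∀ t, S (t+1) ω - S t ω = 1 ∨ S (t+1) ω - S t ω = -1) ∧
        ∀ u, a < u → (S u ω - S a ω).natAbs ≠ k} = 0 := by
  have hk : 0 < k := hk1
  set θ : ℝ := (k:ℝ)⁻¹ with hθ
  have hkR : (1:ℝ) ≤ (k:ℝ) := by exact_mod_cast hk1
  have hkR0 : (0:ℝ) < (k:ℝ) := by linarith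
  have hθ0 : 0 ≤ θ := by positivity
  have hθk : θ * k = 1 := inv_mul_cancel₀ (by positivity)
  have hθ1 : θ ≤ 1 := by
    rw [hθ, inv_le_one_iff₀]
    right; exact hkR
  have hcos0 : 0 ≤ Real.cos θ :=
    cos_nonneg_of_le_one (by rw [abs_of_nonneg hθ0]; exact hθ1)
  have hcos1 : Real.cos θ < 1 := cos_inv_lt_one hk1
  set B := {ω | (∀ t, S (t+1) ω - S t ω = 1 ∨ S (t+1) ω - S t ω = -1) ∧
        ∀ u, a < u → (S u ω - S a ω).natAbs ≠ k} with hB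
  have hmeasB : MeasurableSet B := by
    have hBeq : B = (⋂ t, ({ω | S (t+1) ω - S t ω = 1} ∪ {ω | S (t+1) ω - S t ω = -1})) ∩
        (⋂ u, {ω | a < u → (S u ω - S a ω).natAbs ≠ k}) := by
      ext ω
      simp only [hB, Set.mem_setOf_eq, Set.mem_inter_iff, Set.mem_iInter, Set.mem_union]
    rw [hBeq]
    apply MeasurableSet.inter
    · apply MeasurableSet.iInter
      intro t
      exact ((meas_xi hmeas t) (measurableSet_singleton 1)).union
        ((meas_xi hmeas t) (measurableSet_singleton (-1)))
    · apply MeasurableSet.iInter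
      intro u
      by_cases hu : a < u
      · have he : {ω | a < u → (S u ω - S a ω).natAbs ≠ k} =
            {ω | (S u ω - S a ω).natAbs ≠ k} := by
          ext ω; simp [hu]
        rw [he]
        have hm : Measurable (fun ω => (S u ω - S a ω).natAbs) :=
          (measurable_of_countable Int.natAbs).comp ((hmeas u).sub (hmeas a))
        exact hm (measurableSet_singleton k).compl
      · have he : {ω | a < u → (S u ω - S a ω).natAbs ≠ k} = Set.univ := by
          ext ω; simp [hu]
        rw [he]; exact MeasurableSet.univ
  have hF := integral_F_le hmeas h0 hind hlaw (fun s => if s < a then 1 else Real.cos θ)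
      (fun s => by split; exacts [zero_le_one, hcos0])
      (Fw a k θ) (Gw a k θ) (fun _ => 1) (fun _ => 1)
      (Fw_dep a k θ) (Gw_dep a k θ) (Fw_bound a k θ) (Gw_bound a k θ) (Fw_zero a k θ)
      (fun s p he => Fw_step a k hk θ hθ0 (le_of_eq hθk) s p he)
  have hprod : ∀ T : ℕ, (∏ s ∈ Finset.range (a+T), (if s < a then 1 else Real.cos θ))
      = Real.cos θ ^ T := by
    intro T
    induction T with
    | zero =>
      rw [Nat.add_zero, pow_zero]
      apply Finset.prod_eq_one
      intro s hs
      rw [if_pos (Finset.mem_range.mp hs)]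
    | succ T ih =>
      have : a + (T+1) = (a+T) + 1 := by omega
      rw [this, Finset.prod_range_succ, ih, if_neg (by omega), pow_succ]
  have hbound : ∀ T : ℕ, (μ B).toReal * Real.cos 1 ≤ Real.cos θ ^ T := by
    intro T
    have hptw : ∀ ω, B.indicator (fun _ => Real.cos 1) ω ≤
        Fw a k θ (a+T) (fun u => S u ω) := by
      intro ω
      by_cases hω : ω ∈ B
      · rw [Set.indicator_of_mem hω]
        exact Fw_ge_cos_one a k hk θ hθ0 (le_of_eq hθk) (fun u => S u ω) hω.1 hω.2 (a+T)
      · rw [Set.indicator_of_notMem hω]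
        exact Fw_nonneg a k hk θ hθ0 (le_of_eq hθk) (a+T) (fun u => S u ω)
    have hint1 : Integrable (B.indicator fun _ => Real.cos 1) μ :=
      (integrable_const _).indicator hmeasB
    have hint2 : Integrable (fun ω => Fw a k θ (a+T) (fun u => S u ω)) μ :=
      integrable_pathfun hmeas (a+T) _ (Fw_dep a k θ (a+T)) 1 (Fw_bound a k θ (a+T))
    calc (μ B).toReal * Real.cos 1
        = ∫ ω, B.indicator (fun _ => Real.cos 1) ω ∂μ := by
          rw [integral_indicator_const _ hmeasB, smul_eq_mul, measureReal_def]
      _ ≤ ∫ ω, Fw a k θ (a+T) (fun u => S u ω) ∂μ := integral_mono hint1 hint2 hptw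
      _ ≤ ∏ s ∈ Finset.range (a+T), (if s < a then 1 else Real.cos θ) := hF (a+T)
      _ = Real.cos θ ^ T := hprod T
  have htend : Filter.Tendsto (fun T : ℕ => Real.cos θ ^ T) Filter.atTop (nhds 0) :=
    tendsto_pow_atTop_nhds_zero_of_lt_one hcos0 hcos1
  have hle0 : (μ B).toReal * Real.cos 1 ≤ 0 := ge_of_tendsto' htend hbound
  have hc1 : 0 < Real.cos 1 := Real.cos_one_pos
  have htR : (μ B).toReal = 0 := by nlinarith [ENNReal.toReal_nonneg (a := μ B)]
  rcases (ENNReal.toReal_eq_zero_iff _).mp htR with h | h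
  · exact h
  · exact absurd h (measure_ne_top μ B)

lemma notgood_null (hmeas : ∀ n, Measurable (S n)) (h0 : ∀ ω, S 0 ω = 0)
    (hind : iIndepFun (fun n ω => S (n + 1) ω - S n ω) μ)
    (hlaw : ∀ n, μ {ω | S (n + 1) ω - S n ω = 1} = 1 / 2 ∧
      μ {ω | S (n + 1) ω - S n ω = -1} = 1 / 2)
    {k : ℕ} (hk1 : 1 ≤ k) :
    μ {ω | ¬ ((∀ t, S (t+1) ω - S t ω = 1 ∨ S (t+1) ω - S t ω = -1) ∧
        ∀ b : ℕ, ∃ u, b < u ∧ (S u ω - S b ω).natAbs = k)} = 0 := by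
  have hsub : {ω | ¬ ((∀ t, S (t+1) ω - S t ω = 1 ∨ S (t+1) ω - S t ω = -1) ∧
        ∀ b : ℕ, ∃ u, b < u ∧ (S u ω - S b ω).natAbs = k)} ⊆
      ((⋃ t, {ω | S (t+1) ω - S t ω = 1 ∨ S (t+1) ω - S t ω = -1}ᶜ) ∪
      (⋃ b : ℕ, {ω | (∀ t, S (t+1) ω - S t ω = 1 ∨ S (t+1) ω - S t ω = -1) ∧
        ∀ u, b < u → (S u ω - S b ω).natAbs ≠ k})) := by
    intro ω hω
    simp only [Set.mem_setOf_eq] at hω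
    by_cases hpm : ∀ t, S (t+1) ω - S t ω = 1 ∨ S (t+1) ω - S t ω = -1
    · right
      have hne : ¬ ∀ b : ℕ, ∃ u, b < u ∧ (S u ω - S b ω).natAbs = k := fun hc => hω ⟨hpm, hc⟩
      push_neg at hne
      obtain ⟨b, hb⟩ := hne
      apply Set.mem_iUnion.mpr
      exact ⟨b, ⟨hpm, fun u hu => hb u hu⟩⟩
    · left
      push_neg at hpm
      obtain ⟨t, ht⟩ := hpm
      apply Set.mem_iUnion.mpr
      refine ⟨t, ?_⟩
      intro hc
      rcases hc with h | h
      · exact ht.1 h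
      · exact ht.2 h
  apply measure_mono_null hsub
  apply measure_union_null
  · exact measure_iUnion_null (fun t => xi_pm_ae hmeas hlaw t)
  · exact measure_iUnion_null (fun b => escape_null hmeas h0 hind hlaw hk1 b)

lemma integral_Fy_le (hmeas : ∀ n, Measurable (S n)) (h0 : ∀ ω, S 0 ω = 0)
    (hind : iIndepFun (fun n ω => S (n + 1) ω - S n ω) μ)
    (hlaw : ∀ n, μ {ω | S (n + 1) ω - S n ω = 1} = 1 / 2 ∧
      μ {ω | S (n + 1) ω - S n ω = -1} = 1 / 2)
    {k : ℕ} (hk : 0 < k) (lam : ℝ) (hlam : 0 ≤ lam) (t : ℕ) :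
    ∫ ω, Fy k lam t (fun u => S u ω) ∂μ ≤ Real.cosh lam ^ t := by
  have h := integral_F_le hmeas h0 hind hlaw (fun _ => Real.cosh lam)
    (fun _ => (Real.cosh_pos _).le) (Fy k lam) (Gy k lam)
    (fun s => Real.cosh (lam*k) ^ (s+1))
    (fun s => Real.cosh (lam*k)^s * Real.sinh (lam*k) * Real.sinh lam)
    (Fy_dep k lam) (Gy_dep k lam)
    (fun s p => Fy_bound k hk lam hlam s p) (fun s p => Gy_bound k hk lam hlam s p)
    (Fy_zero k lam)
    (fun s p he => le_of_eq (Fy_step k hk lam s p he)) t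
  calc ∫ ω, Fy k lam t (fun u => S u ω) ∂μ
      ≤ ∏ _s ∈ Finset.range t, Real.cosh lam := h
    _ = Real.cosh lam ^ t := by rw [Finset.prod_const, Finset.card_range]

end SRWproof

/-- Upper tail bound on the number of induced steps: for every `0 < r < 1` there is `c > 0`
such that for all `n, k ≥ 1`, `P(N_k(n) > c n / k²) ≤ exp(−r n / k²)`. -/
theorem numInduced_upper_tail {Ω : Type*} [MeasurableSpace Ω] (μ : Measure Ω)
    [IsProbabilityMeasure μ] (S : ℕ → Ω → ℤ) (hS : IsSRW μ S)
    (r : ℝ) (hr0 : 0 < r) (hr1 : r < 1) :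
    ∃ c : ℝ, 0 < c ∧ ∀ n k : ℕ, 1 ≤ n → 1 ≤ k →
      μ {ω | c * (n : ℝ) / (k : ℝ) ^ 2 < (numInduced (fun t => S t ω) k n : ℝ)} ≤
        ENNReal.ofReal (Real.exp (-(r * (n : ℝ) / (k : ℝ) ^ 2))) := by
  classical
  obtain ⟨h0, hmeas, hind, hlaw⟩ := hS
  refine ⟨4, by norm_num, ?_⟩
  intro n k hn hk
  have hk0 : 0 < k := hk
  have hkR1 : (1:ℝ) ≤ (k:ℝ) := by exact_mod_cast hk
  have hkR0 : (0:ℝ) < (k:ℝ) := by linarith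
  have hnR : (1:ℝ) ≤ (n:ℝ) := by exact_mod_cast hn
  set lam : ℝ := 2 / (k:ℝ) with hlam
  have hlam0 : 0 ≤ lam := by positivity
  have hlamk : lam * (k:ℝ) = 2 := by rw [hlam, div_mul_cancel₀ _ hkR0.ne']
  set M : ℝ := (n:ℝ) / (k:ℝ)^2 with hM
  have hM0 : 0 < M := by positivity
  set L : ℝ := Real.log (Real.cosh 2) with hL
  have hL54 : 5/4 ≤ L := SRWproof.log_cosh_two
  set expL : ℝ := Real.exp (4 * M * L) with hexpL
  set E1 := {ω | expL ≤ SRWproof.Fy k lam n (fun u => S u ω)} with hE1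
  have hEsub : {ω | 4 * (n:ℝ) / (k:ℝ)^2 < (numInduced (fun t => S t ω) k n : ℝ)} ⊆
      E1 ∪ {ω | ¬ ((∀ t, S (t+1) ω - S t ω = 1 ∨ S (t+1) ω - S t ω = -1) ∧
        ∀ b : ℕ, ∃ u, b < u ∧ (S u ω - S b ω).natAbs = k)} := by
    intro ω hω
    by_cases hg : (∀ t, S (t+1) ω - S t ω = 1 ∨ S (t+1) ω - S t ω = -1) ∧
        ∀ b : ℕ, ∃ u, b < u ∧ (S u ω - S b ω).natAbs = k
    swap
    · right; exact hg
    left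
    obtain ⟨hpm, hesc⟩ := hg
    have hstep1 : ∀ t, ((fun u => S u ω) (t+1) - (fun u => S u ω) t).natAbs = 1 := by
      intro t
      rcases hpm t with h | h
      · simp only []; rw [h]; rfl
      · simp only []; rw [h]; rfl
    have hcnt : numInduced (fun u => S u ω) k n = (SRWproof.ac k (fun u => S u ω) n).2 :=
      SRWproof.numInduced_eq_cnt hk0 hstep1 hesc n
    set m := (SRWproof.ac k (fun u => S u ω) n).2 with hm
    have hge := SRWproof.Fy_ge k lam n (fun u => S u ω)
    have h2 : Real.cosh (lam * (k:ℝ)) = Real.cosh 2 := by rw [hlamk]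
    have hmge : 4 * M < (m:ℝ) := by
      have hω' : 4 * (n:ℝ) / (k:ℝ)^2 < (numInduced (fun t => S t ω) k n : ℝ) := hω
      rw [hcnt] at hω'
      calc 4 * M = 4 * (n:ℝ) / (k:ℝ)^2 := by rw [hM]; ring
        _ < (m:ℝ) := hω'
    have hpow : expL ≤ Real.cosh 2 ^ m := by
      have hc2 : Real.cosh 2 ^ m = Real.exp ((m:ℝ) * L) := by
        rw [hL]
        rw [show ((m:ℕ):ℝ) * Real.log (Real.cosh 2) = ((m:ℕ):ℝ) * Real.log (Real.cosh 2) from rfl]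
        rw [Real.exp_nat_mul, Real.exp_log (Real.cosh_pos 2)]
      rw [hc2, hexpL]
      apply Real.exp_le_exp.mpr
      have hL0 : 0 ≤ L := by linarith
      nlinarith [mul_le_mul_of_nonneg_right hmge.le hL0]
    show expL ≤ SRWproof.Fy k lam n (fun u => S u ω)
    calc expL ≤ Real.cosh 2 ^ m := hpow
      _ = Real.cosh (lam * (k:ℝ)) ^ m := by rw [h2]
      _ ≤ SRWproof.Fy k lam n (fun u => S u ω) := hge
  have hnull := SRWproof.notgood_null hmeas h0 hind hlaw hk
  have hmono : μ {ω | 4 * (n:ℝ) / (k:ℝ)^2 < (numInduced (fun t => S t ω) k n : ℝ)} ≤ μ E1 := by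
    calc μ {ω | 4 * (n:ℝ) / (k:ℝ)^2 < (numInduced (fun t => S t ω) k n : ℝ)}
        ≤ μ (E1 ∪ {ω | ¬ ((∀ t, S (t+1) ω - S t ω = 1 ∨ S (t+1) ω - S t ω = -1) ∧
            ∀ b : ℕ, ∃ u, b < u ∧ (S u ω - S b ω).natAbs = k)}) := measure_mono hEsub
      _ ≤ μ E1 + μ {ω | ¬ ((∀ t, S (t+1) ω - S t ω = 1 ∨ S (t+1) ω - S t ω = -1) ∧
            ∀ b : ℕ, ∃ u, b < u ∧ (S u ω - S b ω).natAbs = k)} := measure_union_le _ _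
      _ = μ E1 := by rw [hnull, add_zero]
  have hFy_nonneg : 0 ≤ᵐ[μ] fun ω => SRWproof.Fy k lam n (fun u => S u ω) :=
    Filter.Eventually.of_forall (fun ω => SRWproof.Fy_nonneg k lam n _)
  have hFy_int : Integrable (fun ω => SRWproof.Fy k lam n (fun u => S u ω)) μ :=
    SRWproof.integrable_pathfun hmeas n (SRWproof.Fy k lam n) (SRWproof.Fy_dep k lam n) _
      (SRWproof.Fy_bound k hk0 lam hlam0 n)
  have hmar := MeasureTheory.mul_meas_ge_le_integral_of_nonneg hFy_nonneg hFy_int expL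
  have hIb : ∫ ω, SRWproof.Fy k lam n (fun u => S u ω) ∂μ ≤ Real.exp (4 * M) := by
    have hcosh : Real.cosh lam ≤ Real.exp (4 / (k:ℝ)^2) := by
      have h1 : lam ≤ 2 := by
        rw [hlam]
        rw [div_le_iff₀ hkR0]
        linarith
      have h2 := SRWproof.cosh_le_exp_sq hlam0 h1
      have h3 : lam ^ 2 = 4 / (k:ℝ)^2 := by
        rw [hlam]
        field_simp
        ring
      rwa [h3] at h2
    calc ∫ ω, SRWproof.Fy k lam n (fun u => S u ω) ∂μ
        ≤ Real.cosh lam ^ n := SRWproof.integral_Fy_le hmeas h0 hind hlaw hk0 lam hlam0 n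
      _ ≤ Real.exp (4 / (k:ℝ)^2) ^ n := pow_le_pow_left₀ (Real.cosh_pos _).le hcosh n
      _ = Real.exp ((n:ℝ) * (4 / (k:ℝ)^2)) := (Real.exp_nat_mul _ n).symm
      _ = Real.exp (4 * M) := by rw [hM]; congr 1; ring
  have hexpL_pos : 0 < expL := Real.exp_pos _
  have htoReal : (μ E1).toReal ≤ Real.exp (4*M - 4*M*L) := by
    have h1 : expL * (μ E1).toReal ≤ Real.exp (4*M) := le_trans hmar hIb
    have h2 : Real.exp (4*M - 4*M*L) = Real.exp (4*M) / expL := by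
      rw [hexpL, ← Real.exp_sub]
    rw [h2, le_div_iff₀ hexpL_pos]
    linarith [h1, mul_comm expL (μ E1).toReal]
  have hfinal : Real.exp (4*M - 4*M*L) ≤ Real.exp (-(r * (n:ℝ) / (k:ℝ)^2)) := by
    apply Real.exp_le_exp.mpr
    have hrM : r * (n:ℝ) / (k:ℝ)^2 = r * M := by rw [hM]; ring
    rw [hrM]
    nlinarith [hL54, hM0, hr1.le, mul_le_mul_of_nonneg_left hL54 (by positivity : (0:ℝ) ≤ 4*M)]
  calc μ {ω | 4 * (n:ℝ) / (k:ℝ)^2 < (numInduced (fun t => S t ω) k n : ℝ)}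
      ≤ μ E1 := hmono
    _ = ENNReal.ofReal ((μ E1).toReal) := (ENNReal.ofReal_toReal (measure_ne_top μ _)).symm
    _ ≤ ENNReal.ofReal (Real.exp (-(r * (n:ℝ) / (k:ℝ)^2))) :=
        ENNReal.ofReal_le_ofReal (le_trans htoReal hfinal)
end

section
/- Let g: [1,∞) → [1,∞) be such that x ↦ g(x)/(log log x)^{1+ε} is non-decreasing (for x large) for some ε > 0. Fix m₀ > 1 and suppose k_s, l_s ≥ 1 satisfy g(k_s·l_s) = l_s and log log k_s ≤ l_s. Then g(m₀·l_s·exp(exp(m₀·l_s))) ≥ m₀^{1+ε}·l_s·(l_s/(l_s + log log l_s))^{1+ε}; in particular, if l_s is sufficiently large this is at least m₀·l_s. -/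
/-!
Comparing `g` at `x = k·l` and at `y = m₀·l·exp(exp(m₀·l))` through the monotone quotient
gives `g(y) ≥ g(x)·(log log y / log log x)^(1+ε) = l·(log log y / log log x)^(1+ε)`. Here
`log log x ≤ l + log log l`, because `log k ≤ exp l`, and `log log y ≥ m₀·l`. Since
`log log l = o(l)`, the ratio `l / (l + log log l)` tends to `1`, so the lower bound
eventually exceeds `m₀·l` as `m₀^ε > 1`.
-/

open Real Filter Asymptotics Topology

lemma le_exp_exp_of_log_log_le {k l : ℝ} (hk : 0 < k) (h : log (log k) ≤ l) :
    k ≤ exp (exp l) := by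
  rw [← log_le_iff_le_exp hk]
  rcases le_or_gt (log k) 0 with hlog | hlog
  · exact hlog.trans (exp_pos l).le
  · exact (log_le_iff_le_exp hlog).mp h

lemma log_log_mul_le_add_log_log {k l : ℝ} (hk : 1 ≤ k) (hl : exp 2 ≤ l)
    (hkl : log (log k) ≤ l) : log (log (k * l)) ≤ l + log (log l) := by
  have hl0 : 0 < l := (exp_pos 2).trans_le hl
  have hlogl : 2 ≤ log l := (le_log_iff_exp_le hl0).mpr hl
  have hexpl : 2 ≤ exp l := by linarith [add_one_le_exp l, add_one_le_exp 2]
  have hlogk : log k ≤ exp l :=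
    log_le_iff_le_exp (by linarith) |>.mpr (le_exp_exp_of_log_log_le (by linarith) hkl)
  calc log (log (k * l)) = log (log k + log l) := by
        rw [log_mul (by positivity) hl0.ne']
    _ ≤ log (exp l * log l) :=
        log_le_log (by linarith [log_nonneg hk]) (by nlinarith)
    _ = l + log (log l) := by rw [log_mul (exp_ne_zero l) (by linarith), log_exp]

lemma le_log_log_mul_exp_exp {x : ℝ} (hx : 1 ≤ x) : x ≤ log (log (x * exp (exp x))) := by
  rw [log_mul (by linarith) (exp_ne_zero _), log_exp, le_log_iff_exp_le (by
    linarith [log_nonneg hx, exp_pos x])]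
  linarith [log_nonneg hx]

lemma MonotoneOn.div_mul_le {α : Type*} [Preorder α] {g φ : α → ℝ} {s : Set α}
    (hmono : MonotoneOn (fun x => g x / φ x) s) {x y : α} (hx : x ∈ s) (hy : y ∈ s)
    (hxy : x ≤ y) (hφ : 0 < φ y) : g x / φ x * φ y ≤ g y := by
  simpa [div_mul_cancel₀ _ hφ.ne'] using mul_le_mul_of_nonneg_right (hmono hx hy hxy) hφ.le

lemma tendsto_div_add_log_log_atTop :
    Tendsto (fun l => l / (l + log (log l))) atTop (𝓝 1) := by
  have hlittle : (fun l => log (log l)) =o[atTop] id :=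
    (isLittleO_log_id_atTop.comp_tendsto tendsto_log_atTop).trans isLittleO_log_id_atTop
  have hequiv : (fun l => l + log (log l)) ~[atTop] id :=
    (IsEquivalent.refl (u := id)).add_isLittleO hlittle
  refine (isEquivalent_iff_tendsto_one ?_).mp hequiv.symm
  filter_upwards [eventually_ge_atTop (exp 1)] with l hl
  have : 0 ≤ log (log l) :=
    log_nonneg ((le_log_iff_exp_le ((exp_pos 1).trans_le hl)).mpr hl)
  linarith [exp_pos 1]

lemma rpow_mul_div_add_log_log_le_of_monotoneOn {g : ℝ → ℝ} {p m₀ : ℝ} (hp : 0 ≤ p)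
    (hm₀ : 1 ≤ m₀)
    (hmono : MonotoneOn (fun x => g x / log (log x) ^ p) (Set.Ici (exp (exp 1))))
    {k l : ℝ} (hk : 1 ≤ k) (hl : exp (exp 1) ≤ l) (hg : g (k * l) = l)
    (hkl : log (log k) ≤ l) :
    m₀ ^ p * l * (l / (l + log (log l))) ^ p ≤ g (m₀ * l * exp (exp (m₀ * l))) := by
  have hexp1 : 2 ≤ exp 1 := by linarith [add_one_le_exp 1]
  have hl2 : exp 2 ≤ l := (exp_le_exp.mpr hexp1).trans hl
  have hl1 : 1 ≤ l := by linarith [add_one_le_exp 2]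
  have hml : l ≤ m₀ * l := le_mul_of_one_le_left (by linarith) hm₀
  have hlll : 0 ≤ log (log l) :=
    log_nonneg <| (le_log_iff_exp_le (by linarith)).mpr <|
      (exp_le_exp.mpr (by norm_num)).trans hl2
  set x := k * l
  set y := m₀ * l * exp (exp (m₀ * l))
  have hx : exp (exp 1) ≤ x := hl.trans (le_mul_of_one_le_left (by linarith) hk)
  have hxy : x ≤ y := by
    have hk' : k ≤ exp (exp (m₀ * l)) :=
      (le_exp_exp_of_log_log_le (by linarith) hkl).trans (by gcongr)
    calc x ≤ exp (exp (m₀ * l)) * (m₀ * l) := mul_le_mul hk' hml (by linarith) (by positivity)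
      _ = y := mul_comm _ _
  have hA : 0 < log (log x) :=
    log_pos <| (lt_log_iff_exp_lt (by positivity)).mpr <|
      (exp_lt_exp.mpr (by linarith)).trans_le hx
  have hA_le : log (log x) ≤ l + log (log l) := log_log_mul_le_add_log_log hk hl2 hkl
  have hB : m₀ * l ≤ log (log y) := le_log_log_mul_exp_exp (by linarith)
  calc m₀ ^ p * l * (l / (l + log (log l))) ^ p = l * (m₀ * l / (l + log (log l))) ^ p := by
        rw [mul_div_assoc, mul_rpow (by linarith) (by positivity)]; ring
    _ ≤ l * (log (log y) / log (log x)) ^ p := by gcongr; linarith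
    _ = g x / log (log x) ^ p * log (log y) ^ p := by
        rw [div_rpow (by linarith) hA.le, hg]; ring
    _ ≤ g y := hmono.div_mul_le hx (hx.trans hxy) hxy (rpow_pos_of_pos (by linarith) p)

/-- If `x ↦ g(x)/(log log x)^(1+ε)` is non-decreasing for large `x`, `m₀ > 1`, and
`k, l ≥ 1` satisfy `g(k·l) = l` and `log log k ≤ l`, then
`g(m₀·l·exp(exp(m₀·l))) ≥ m₀^(1+ε)·l·(l/(l + log log l))^(1+ε)`, and in particular
for `l` sufficiently large this is at least `m₀·l`. -/
theorem approx_loglog (g : ℝ → ℝ) (ε m₀ : ℝ) (hε : 0 < ε) (hm₀ : 1 < m₀)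
    (hmono : MonotoneOn (fun x => g x / Real.log (Real.log x) ^ (1 + ε))
      (Set.Ici (Real.exp (Real.exp 1)))) :
    (∀ k l : ℝ, 1 ≤ k → Real.exp (Real.exp 1) ≤ l →
      g (k * l) = l → Real.log (Real.log k) ≤ l →
      m₀ ^ (1 + ε) * l * (l / (l + Real.log (Real.log l))) ^ (1 + ε) ≤
        g (m₀ * l * Real.exp (Real.exp (m₀ * l)))) ∧
    (∃ L : ℝ, ∀ k l : ℝ, 1 ≤ k → L ≤ l →
      g (k * l) = l → Real.log (Real.log k) ≤ l →
      m₀ * l ≤ g (m₀ * l * Real.exp (Real.exp (m₀ * l)))) := by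
  have hbound := fun k l (hk : 1 ≤ k) (hl : exp (exp 1) ≤ l) hg hkl =>
    rpow_mul_div_add_log_log_le_of_monotoneOn (by linarith) hm₀.le hmono hk hl hg hkl
  refine ⟨hbound, ?_⟩
  have hlim : Tendsto (fun l => m₀ ^ ε * (l / (l + log (log l))) ^ (1 + ε)) atTop
      (𝓝 (m₀ ^ ε)) := by
    simpa using (tendsto_div_add_log_log_atTop.rpow_const (Or.inr (by linarith))).const_mul
      (m₀ ^ ε)
  obtain ⟨L, hL⟩ := eventually_atTop.mp
    ((hlim.eventually (eventually_ge_nhds (one_lt_rpow hm₀ hε))).and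
      (eventually_ge_atTop (exp (exp 1))))
  refine ⟨L, fun k l hk hl hg hkl => ?_⟩
  obtain ⟨hone, hlL⟩ := hL l hl
  have hl0 : 0 ≤ l := (exp_pos _).le.trans hlL
  calc m₀ * l ≤ m₀ * l * (m₀ ^ ε * (l / (l + log (log l))) ^ (1 + ε)) :=
        le_mul_of_one_le_right (by positivity) hone
    _ = m₀ ^ (1 + ε) * l * (l / (l + log (log l))) ^ (1 + ε) := by
        rw [rpow_add (by linarith : (0 : ℝ) < m₀), rpow_one]; ring
    _ ≤ g (m₀ * l * exp (exp (m₀ * l))) := hbound k l hk hlL hg hkl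
end
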